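/- arXiv:1009.2142 — 3 statements merged into one kernel-verified Lean document; each statement's English description precedes it below -/
import Mathlib

section
/- Let ≺ be a strict total order on ℤ, let p,q ∈ ℤ², and let r,s ∈ S_≺(p,q). Then H(\overline{rs}, S_≺(r,s)) ≤ 2·H(\overline{pq}, S_≺(p,q)). -/
/- `upAt prec p q t` : the level `t` is among the `q.2 - p.2` greatest elements
(w.r.t. the order `prec`) of the segment interval `[p.1+p.2, q.1+q.2-1]`. -/
open Classical in
noncomputable def upAt (prec : ℤ → ℤ → Prop) (p q : ℤ × ℤ) (t : ℤ) : Prop :=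
  (((Finset.Ico (p.1 + p.2) (q.1 + q.2)).filter (fun u => u = t ∨ prec t u)).card : ℤ)
    ≤ q.2 - p.2

/- The digital segment derived from `prec`, for `p.1 ≤ q.1` and `p.2 ≤ q.2`:
the monotone staircase from `p` to `q` that goes up at level `t` exactly when
`upAt prec p q t` holds. -/
open Classical in
noncomputable def digSegNE (prec : ℤ → ℤ → Prop) (p q : ℤ × ℤ) : Set (ℤ × ℤ) :=
  { r | p.1 + p.2 ≤ r.1 + r.2 ∧ r.1 + r.2 ≤ q.1 + q.2 ∧
    r.2 = p.2 + (((Finset.Ico (p.1 + p.2) (r.1 + r.2)).filter (fun t => upAt prec p q t)).card : ℤ) }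

/- The digital segment for `p.1 ≤ q.1` (reflecting over the `y`-axis if `p.2 > q.2`). -/
noncomputable def digSegAux (prec : ℤ → ℤ → Prop) (p q : ℤ × ℤ) : Set (ℤ × ℤ) :=
  if p.2 ≤ q.2 then digSegNE prec p q
  else (fun r : ℤ × ℤ => (-r.1, r.2)) '' digSegNE prec (-q.1, q.2) (-p.1, p.2)

/- The full system of digital segments `S_≺` derived from the order `prec`. -/
noncomputable def digSeg (prec : ℤ → ℤ → Prop) (p q : ℤ × ℤ) : Set (ℤ × ℤ) :=
  if p.1 ≤ q.1 then digSegAux prec p q else digSegAux prec q p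

/- Adjacency in the grid graph on `ℤ²`. -/
def GridAdj (p q : ℤ × ℤ) : Prop :=
  (|q.1 - p.1| = 1 ∧ q.2 = p.2) ∨ (q.1 = p.1 ∧ |q.2 - p.2| = 1)

/- `S` is the vertex set of a path from `p` to `q` in the grid graph on `ℤ²`. -/
def IsGridPath (p q : ℤ × ℤ) (S : Set (ℤ × ℤ)) : Prop :=
  ∃ n : ℕ, ∃ f : Fin (n + 1) → ℤ × ℤ, f 0 = p ∧ f (Fin.last n) = q ∧
    Function.Injective f ∧ (∀ i : Fin n, GridAdj (f i.castSucc) (f i.succ)) ∧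
    Set.range f = S

/- A consistent digital line segments system (CDS): axioms (S1)-(S5). -/
structure IsCDS (S : ℤ × ℤ → ℤ × ℤ → Set (ℤ × ℤ)) : Prop where
  path : ∀ p q, IsGridPath p q (S p q)                     -- (S1)
  symm : ∀ p q, S p q = S q p                               -- (S2)
  subseg : ∀ p q r, r ∈ S p q → S p r ⊆ S p q               -- (S3)
  prolong : ∀ p q, ∃ r, r ∉ S p q ∧ S p q ⊆ S p r           -- (S4)
  monoV : ∀ p q, p.1 = q.1 → ∀ r ∈ S p q, r.1 = p.1         -- (S5), vertical
  monoH : ∀ p q, p.2 = q.2 → ∀ r ∈ S p q, r.2 = p.2         -- (S5), horizontal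

/- The inclusion `ℤ² ⊆ ℝ²` (Euclidean plane). -/
noncomputable def toR2 (p : ℤ × ℤ) : EuclideanSpace ℝ (Fin 2) := WithLp.toLp 2 ![(p.1 : ℝ), (p.2 : ℝ)]

/- The 2-adic valuation of an integer, with `v2 0 = ⊤`. -/
noncomputable def v2 (k : ℤ) : ℕ∞ := if k = 0 then ⊤ else (padicValInt 2 k : ℕ∞)

/- The total order on `ℤ` defined via 2-adic valuations. -/
def vorder (a b : ℤ) : Prop :=
  ∃ i : ℕ, v2 (a - i) < v2 (b - i) ∧ ∀ j : ℕ, j < i → v2 (a - j) = v2 (b - j)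
/-!
Write `H` for the Hausdorff distance between `pq` and `S(p, q)`. Both sides are invariant under
`S(p, q) = S(q, p)` and under the reflection in the `y`-axis, so we may assume `p ≤ q`
coordinatewise; then `S(p, q)` is a monotone chain, and for `r ≤ s` on it `S(r, s)` is exactly the
stretch of `S(p, q)` from `r` to `s`: the up-levels of `S(p, q)` inside `[r, s)` form a `≺`-upper
set of size `s.2 - r.2`, hence are the `s.2 - r.2` greatest levels there.

The rest is plane geometry. A point `x` of `rs` is within `H` of the matching convex combination
`y` of points of `pq` near `r` and `s`, and `y` is within `H` of some `b ∈ S(p, q)`; if `b` lies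
outside the stretch from `r` to `s`, the nearer of `r`, `s` lies coordinatewise between `x` and `b`
and is even closer to `x`. Conversely a point `a` of `S(r, s)` is within `H` of some `y ∈ pq`, which
is either a convex combination of the points of `pq` near `r` and `s`, or lies coordinatewise
beyond one of them, and then that endpoint is within `2H` of `a`.
-/

open Metric WithLp

theorem WithLp.ofLp_mem_segment {𝕜 V : Type*} [Semiring 𝕜] [PartialOrder 𝕜] [AddCommGroup V]
    [Module 𝕜 V] {p : ENNReal} {x y z : WithLp p V} (hz : z ∈ segment 𝕜 x y) :
    ofLp z ∈ segment 𝕜 (ofLp x) (ofLp y) := by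
  obtain ⟨a, b, ha, hb, hab, rfl⟩ := hz
  exact ⟨a, b, ha, hb, hab, rfl⟩

theorem WithLp.ofLp_lineMap {𝕜 V : Type*} [Ring 𝕜] [AddCommGroup V] [Module 𝕜 V] {p : ENNReal}
    (x y : WithLp p V) (t : 𝕜) :
    ofLp (AffineMap.lineMap x y t) = AffineMap.lineMap (ofLp x) (ofLp y) t :=
  rfl

section EuclideanCoordinates

variable {ι : Type*} [Fintype ι]

theorem EuclideanSpace.norm_le_norm_add_norm_of_abs_le {u v w : EuclideanSpace ℝ ι}
    (h : ∀ i, |u i| ≤ |v i| + |w i|) : ‖u‖ ≤ ‖v‖ + ‖w‖ := by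
  let absLp : EuclideanSpace ℝ ι → EuclideanSpace ℝ ι := fun x => toLp 2 fun i => |x i|
  have norm_absLp (x : EuclideanSpace ℝ ι) : ‖absLp x‖ = ‖x‖ := by
    simp [absLp, EuclideanSpace.norm_eq]
  calc ‖u‖ ≤ ‖absLp v + absLp w‖ := by
        rw [EuclideanSpace.norm_eq, EuclideanSpace.norm_eq]
        gcongr with i
        simpa [absLp] using (h i).trans (le_abs_self _)
    _ ≤ ‖v‖ + ‖w‖ := (norm_add_le _ _).trans_eq (by rw [norm_absLp, norm_absLp])

theorem EuclideanSpace.dist_le_dist_add_dist_of_le {a r y y' : EuclideanSpace ℝ ι}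
    (hra : ofLp r ≤ ofLp a) (hy : ofLp y ≤ ofLp y') : dist a r ≤ dist a y + dist y' r := by
  simp only [dist_eq_norm]
  refine norm_le_norm_add_norm_of_abs_le fun i => ?_
  have hyi := hy i
  simp only [PiLp.sub_apply]
  rw [abs_of_nonneg (sub_nonneg.2 (hra i))]
  linarith [le_abs_self (a i - y i), le_abs_self (y' i - r i)]

end EuclideanCoordinates

theorem exists_mem_segment_dist_le {E : Type*} [SeminormedAddCommGroup E] [NormedSpace ℝ E]
    {a b a' b' z : E} {d : ℝ} (ha : dist a a' ≤ d) (hb : dist b b' ≤ d)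
    (hz : z ∈ segment ℝ a b) : ∃ z' ∈ segment ℝ a' b', dist z z' ≤ d := by
  obtain ⟨s, t, hs, ht, hst, rfl⟩ := hz
  refine ⟨s • a' + t • b', ⟨s, t, hs, ht, hst, rfl⟩, ?_⟩
  have := convex_closedBall (0 : E) d (mem_closedBall_zero_iff.2 (dist_eq_norm a a' ▸ ha))
    (mem_closedBall_zero_iff.2 (dist_eq_norm b b' ▸ hb)) hs ht hst
  rwa [mem_closedBall_zero_iff, smul_sub, smul_sub, ← add_sub_add_comm, ← dist_eq_norm] at this

theorem exists_dist_le_hausdorffDist {α : Type*} [PseudoMetricSpace α] {s t : Set α}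
    (hs : Bornology.IsBounded s) (ht : IsCompact t) (ht0 : t.Nonempty) {x : α} (hx : x ∈ s) :
    ∃ y ∈ t, dist x y ≤ hausdorffDist s t := by
  obtain ⟨y, hy, hxy⟩ := ht.exists_infDist_eq_dist ht0 x
  refine ⟨y, hy, hxy ▸ infDist_le_hausdorffDist_of_mem hx ?_⟩
  exact hausdorffEDist_ne_top_of_nonempty_of_bounded ⟨x, hx⟩ ht0 hs ht.isBounded

section ChainApproximation

open Set WithLp EuclideanSpace

variable {ι : Type*} [Fintype ι] {p q r s : EuclideanSpace ℝ ι} {S : Set (EuclideanSpace ℝ ι)}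
  {d : ℝ}

theorem exists_mem_inter_Icc_dist_le_two_mul (hchain : IsChain (· ≤ ·) (ofLp '' S))
    (hr : r ∈ S) (hs : s ∈ S) (hrs : ofLp r ≤ ofLp s)
    (near_seg : ∀ a ∈ S, ∃ y ∈ segment ℝ p q, dist a y ≤ d)
    (near_S : ∀ y ∈ segment ℝ p q, ∃ b ∈ S, dist y b ≤ d)
    {x : EuclideanSpace ℝ ι} (hx : x ∈ segment ℝ r s) :
    ∃ b ∈ S ∩ ofLp ⁻¹' Icc (ofLp r) (ofLp s), dist x b ≤ 2 * d := by
  obtain ⟨yr, hyr, hryr⟩ := near_seg r hr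
  obtain ⟨ys, hys, hsys⟩ := near_seg s hs
  obtain ⟨y, hy, hxy⟩ := exists_mem_segment_dist_le hryr hsys hx
  obtain ⟨b, hb, hyb⟩ := near_S y ((convex_segment p q).segment_subset hyr hys hy)
  have hxb : dist x b ≤ 2 * d := by linarith [dist_triangle x y b]
  obtain ⟨hrx, hxs⟩ := segment_subset_Icc hrs (ofLp_mem_segment hx)
  rcases hchain.total (mem_image_of_mem ofLp hb) (mem_image_of_mem ofLp hr) with hbr | hrb
  · refine ⟨r, ⟨hr, le_rfl, hrs⟩, ?_⟩
    linarith [dist_le_dist_add_dist_of_le hrx hbr, dist_self r]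
  rcases hchain.total (mem_image_of_mem ofLp hb) (mem_image_of_mem ofLp hs) with hbs | hsb
  · exact ⟨b, ⟨hb, hrb, hbs⟩, hxb⟩
  · refine ⟨s, ⟨hs, hrs, le_rfl⟩, ?_⟩
    linarith [dist_le_dist_add_dist_of_le hxs hsb, dist_self s, dist_comm x s, dist_comm b x]

theorem exists_mem_segment_dist_le_two_mul (hpq : ofLp p ≤ ofLp q) (hr : r ∈ S) (hs : s ∈ S)
    (near_seg : ∀ a ∈ S, ∃ y ∈ segment ℝ p q, dist a y ≤ d)
    {a : EuclideanSpace ℝ ι} (ha : a ∈ S ∩ ofLp ⁻¹' Icc (ofLp r) (ofLp s)) :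
    ∃ z ∈ segment ℝ r s, dist a z ≤ 2 * d := by
  obtain ⟨ha, hra, has⟩ := ha
  obtain ⟨y, hy, hay⟩ := near_seg a ha
  obtain ⟨yr, hyr, hryr⟩ := near_seg r hr
  obtain ⟨ys, hys, hsys⟩ := near_seg s hs
  rw [segment_eq_image_lineMap] at hy hyr hys
  obtain ⟨α, -, rfl⟩ := hy
  obtain ⟨β, -, rfl⟩ := hyr
  obtain ⟨γ, -, rfl⟩ := hys
  have hmono : Monotone fun t : ℝ => ofLp (AffineMap.lineMap p q t) := by
    simpa only [ofLp_lineMap] using AffineMap.lineMap_mono hpq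
  have of_mem_uIcc (h : α ∈ uIcc β γ) : ∃ z ∈ segment ℝ r s, dist a z ≤ 2 * d := by
    have hy : AffineMap.lineMap p q α ∈
        segment ℝ (AffineMap.lineMap p q β) (AffineMap.lineMap p q γ) := by
      rw [← image_segment, segment_eq_uIcc]
      exact mem_image_of_mem _ h
    obtain ⟨z, hz, hyz⟩ :=
      exists_mem_segment_dist_le (dist_comm r _ ▸ hryr) (dist_comm s _ ▸ hsys) hy
    exact ⟨z, hz, by linarith [dist_triangle a (AffineMap.lineMap p q α) z]⟩
  rcases le_or_gt β α with hβα | hαβ <;> rcases le_or_gt γ α with hγα | hαγ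
  · refine ⟨s, right_mem_segment ℝ r s, ?_⟩
    linarith [dist_le_dist_add_dist_of_le has (hmono hγα), dist_comm a s,
      dist_comm (AffineMap.lineMap p q α) a]
  · exact of_mem_uIcc (mem_uIcc.2 (Or.inl ⟨hβα, hαγ.le⟩))
  · exact of_mem_uIcc (mem_uIcc.2 (Or.inr ⟨hγα, hαβ.le⟩))
  · refine ⟨r, left_mem_segment ℝ r s, ?_⟩
    linarith [dist_le_dist_add_dist_of_le hra (hmono hαβ.le),
      dist_comm (AffineMap.lineMap p q β) r]

theorem hausdorffDist_segment_inter_Icc_le (hpq : ofLp p ≤ ofLp q) (hS : IsCompact S)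
    (hchain : IsChain (· ≤ ·) (ofLp '' S)) (hr : r ∈ S) (hs : s ∈ S) (hrs : ofLp r ≤ ofLp s) :
    hausdorffDist (segment ℝ r s) (S ∩ ofLp ⁻¹' Icc (ofLp r) (ofLp s)) ≤
      2 * hausdorffDist (segment ℝ p q) S := by
  set H := hausdorffDist (segment ℝ p q) S
  have hseg : IsCompact (segment ℝ p q) := by
    rw [segment_eq_image_lineMap]
    exact isCompact_Icc.image AffineMap.lineMap_continuous
  have near_seg (a) (ha : a ∈ S) : ∃ y ∈ segment ℝ p q, dist a y ≤ H := by
    obtain ⟨y, hy, hay⟩ :=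
      exists_dist_le_hausdorffDist hS.isBounded hseg ⟨p, left_mem_segment ℝ p q⟩ ha
    exact ⟨y, hy, hay.trans_eq hausdorffDist_comm⟩
  have near_S (y) (hy : y ∈ segment ℝ p q) : ∃ b ∈ S, dist y b ≤ H :=
    exists_dist_le_hausdorffDist hseg.isBounded hS ⟨r, hr⟩ hy
  refine hausdorffDist_le_of_infDist (mul_nonneg zero_le_two hausdorffDist_nonneg)
    (fun x hx => ?_) (fun a ha => ?_)
  · obtain ⟨b, hb, hxb⟩ :=
      exists_mem_inter_Icc_dist_le_two_mul hchain hr hs hrs near_seg near_S hx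
    exact (infDist_le_dist_of_mem hb).trans hxb
  · obtain ⟨z, hz, haz⟩ := exists_mem_segment_dist_le_two_mul hpq hr hs near_seg ha
    exact (infDist_le_dist_of_mem hz).trans haz

end ChainApproximation

section Rank

open Finset

variable {α : Type*} [DecidableEq α] (prec : α → α → Prop)

open Classical in
noncomputable def rankIn (I : Finset α) (t : α) : ℕ :=
  #{u ∈ I | u = t ∨ prec t u}

variable {prec}

open Classical in
theorem rankIn_pos {I : Finset α} {t : α} (ht : t ∈ I) : 0 < rankIn prec I t :=
  card_pos.2 ⟨t, mem_filter.2 ⟨ht, Or.inl rfl⟩⟩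

open Classical in
theorem rankIn_le_card (I : Finset α) (t : α) : rankIn prec I t ≤ #I :=
  card_filter_le _ _

open Classical in
theorem rankIn_le_rankIn_of_prec [IsTrans α prec] (I : Finset α) {t u : α} (h : prec t u) :
    rankIn prec I u ≤ rankIn prec I t := by
  refine card_le_card fun w hw => ?_
  obtain ⟨hwI, rfl | hw⟩ := mem_filter.1 hw
  exacts [mem_filter.2 ⟨hwI, Or.inr h⟩, mem_filter.2 ⟨hwI, Or.inr (_root_.trans h hw)⟩]

open Classical in
theorem rankIn_le_card_iff_mem [Std.Trichotomous prec] {I U : Finset α} (hUI : U ⊆ I)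
    (hU : ∀ u ∈ U, ∀ v ∈ I, prec u v → v ∈ U) {t : α} (ht : t ∈ I) :
    rankIn prec I t ≤ #U ↔ t ∈ U := by
  refine ⟨fun h => ?_, fun htU => card_le_card fun u hu => ?_⟩
  · by_contra htU
    have hsub : insert t U ⊆ {u ∈ I | u = t ∨ prec t u} := by
      intro u hu
      rcases mem_insert.1 hu with rfl | hu
      · exact mem_filter.2 ⟨ht, Or.inl rfl⟩
      refine mem_filter.2 ⟨hUI hu, ?_⟩
      rcases trichotomous_of prec t u with htu | rfl | hut
      exacts [Or.inr htu, absurd hu htU, absurd (hU u hu t ht hut) htU]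
    have := card_le_card hsub
    rw [card_insert_of_notMem htU] at this
    exact absurd h (by unfold rankIn; omega)
  · obtain ⟨huI, rfl | htu⟩ := mem_filter.1 hu
    exacts [htU, hU t htU u huI htu]

end Rank

section UpSteps

open Finset

variable (prec : ℤ → ℤ → Prop)

open Classical in
noncomputable def upCount (p q : ℤ × ℤ) (w : ℤ) : ℕ :=
  #{t ∈ Ico (p.1 + p.2) w | upAt prec p q t}

variable {prec} {p q r s a b : ℤ × ℤ}

theorem upAt_iff_rankIn {t : ℤ} :
    upAt prec p q t ↔ (rankIn prec (Ico (p.1 + p.2) (q.1 + q.2)) t : ℤ) ≤ q.2 - p.2 :=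
  Iff.rfl

theorem mem_digSegNE : a ∈ digSegNE prec p q ↔ p.1 + p.2 ≤ a.1 + a.2 ∧ a.1 + a.2 ≤ q.1 + q.2 ∧
    a.2 = p.2 + upCount prec p q (a.1 + a.2) :=
  Iff.rfl

theorem upAt_of_prec [IsTrans ℤ prec] {t u : ℤ} (ht : upAt prec p q t) (htu : prec t u) :
    upAt prec p q u :=
  upAt_iff_rankIn.2 <| (Nat.cast_le.2 (rankIn_le_rankIn_of_prec _ htu)).trans ht

open Classical in
theorem upCount_add {w w' : ℤ} (hw : p.1 + p.2 ≤ w) (hww' : w ≤ w') :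
    upCount prec p q w' = upCount prec p q w + #{t ∈ Ico w w' | upAt prec p q t} := by
  rw [upCount, upCount, ← card_union_of_disjoint
    (disjoint_filter_filter (Ico_disjoint_Ico_consecutive _ _ _)), ← filter_union,
    Ico_union_Ico_eq_Ico hw hww']

open Classical in
theorem le_of_mem_digSegNE (ha : a ∈ digSegNE prec p q) (hb : b ∈ digSegNE prec p q)
    (hab : a.1 + a.2 ≤ b.1 + b.2) : a ≤ b := by
  rw [mem_digSegNE] at ha hb
  have hcount := upCount_add (q := q) (prec := prec) ha.1 hab
  have hsteps := (card_filter_le (Ico (a.1 + a.2) (b.1 + b.2)) (fun t => upAt prec p q t)).trans_eq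
    (Int.card_Ico _ _)
  rw [Prod.le_def]
  omega

theorem isChain_digSegNE : IsChain (· ≤ ·) (digSegNE prec p q) :=
  fun a ha b hb _ => (le_total (a.1 + a.2) (b.1 + b.2)).imp
    (le_of_mem_digSegNE ha hb) (le_of_mem_digSegNE hb ha)

theorem digSegNE_finite : (digSegNE prec p q).Finite := by
  refine Set.Finite.of_finite_image ((Set.finite_Icc (p.1 + p.2) (q.1 + q.2)).subset ?_)
    (f := fun a : ℤ × ℤ => a.1 + a.2) fun a ha b hb (hab : a.1 + a.2 = b.1 + b.2) => ?_
  · rintro _ ⟨a, ha, rfl⟩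
    exact ⟨ha.1, ha.2.1⟩
  · have ha2 := (mem_digSegNE.1 ha).2.2
    have hb2 := (mem_digSegNE.1 hb).2.2
    rw [hab] at ha2
    ext <;> omega

end UpSteps

section Subsegment

open Finset

variable {prec : ℤ → ℤ → Prop} [IsTrans ℤ prec] [Std.Trichotomous prec] {p q r s : ℤ × ℤ}

open Classical in
theorem upAt_iff_upAt_of_mem_digSegNE (hr : r ∈ digSegNE prec p q) (hs : s ∈ digSegNE prec p q)
    (hrs : r.1 + r.2 ≤ s.1 + s.2) {t : ℤ} (ht : t ∈ Ico (r.1 + r.2) (s.1 + s.2)) :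
    upAt prec r s t ↔ upAt prec p q t := by
  obtain ⟨hpr, -, hr2⟩ := mem_digSegNE.1 hr
  have hs2 := (mem_digSegNE.1 hs).2.2
  have hcount := upCount_add (q := q) (prec := prec) hpr hrs
  set U := {u ∈ Ico (r.1 + r.2) (s.1 + s.2) | upAt prec p q u}
  have hU : (#U : ℤ) = s.2 - r.2 := by omega
  have hUup : ∀ u ∈ U, ∀ v ∈ Ico (r.1 + r.2) (s.1 + s.2), prec u v → v ∈ U :=
    fun u hu v hv huv => mem_filter.2 ⟨hv, upAt_of_prec (mem_filter.1 hu).2 huv⟩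
  rw [upAt_iff_rankIn, ← hU, Nat.cast_le, rankIn_le_card_iff_mem (filter_subset _ _) hUup ht,
    mem_filter, and_iff_right ht]

open Classical in
theorem upCount_of_mem_digSegNE (hr : r ∈ digSegNE prec p q) (hs : s ∈ digSegNE prec p q)
    (hrs : r.1 + r.2 ≤ s.1 + s.2) {w : ℤ} (hrw : r.1 + r.2 ≤ w) (hws : w ≤ s.1 + s.2) :
    (upCount prec r s w : ℤ) = upCount prec p q w - upCount prec p q (r.1 + r.2) := by
  rw [upCount_add (q := q) (prec := prec) hr.1 hrw, upCount, filter_congr fun t ht =>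
    upAt_iff_upAt_of_mem_digSegNE hr hs hrs (Ico_subset_Ico_right hws ht)]
  push_cast
  ring

theorem digSegNE_eq_inter_Icc (hr : r ∈ digSegNE prec p q) (hs : s ∈ digSegNE prec p q)
    (hrs : r ≤ s) : digSegNE prec r s = digSegNE prec p q ∩ Set.Icc r s := by
  have hlevel : r.1 + r.2 ≤ s.1 + s.2 := add_le_add hrs.1 hrs.2
  obtain ⟨hpr, -, hr2⟩ := mem_digSegNE.1 hr
  obtain ⟨-, hsq, -⟩ := mem_digSegNE.1 hs
  ext a
  constructor
  · intro ha
    obtain ⟨hra, has, ha2⟩ := mem_digSegNE.1 ha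
    have hcount := upCount_of_mem_digSegNE hr hs hlevel hra has
    have ha' : a ∈ digSegNE prec p q := mem_digSegNE.2 ⟨by omega, by omega, by omega⟩
    exact ⟨ha', le_of_mem_digSegNE hr ha' hra, le_of_mem_digSegNE ha' hs has⟩
  · rintro ⟨ha, hra, has⟩
    have hra : r.1 + r.2 ≤ a.1 + a.2 := add_le_add hra.1 hra.2
    have has : a.1 + a.2 ≤ s.1 + s.2 := add_le_add has.1 has.2
    have hcount := upCount_of_mem_digSegNE hr hs hlevel hra has
    have ha2 := (mem_digSegNE.1 ha).2.2
    exact mem_digSegNE.2 ⟨hra, has, by omega⟩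

end Subsegment

section Reflection

open Finset

def reflectY (a : ℤ × ℤ) : ℤ × ℤ := (-a.1, a.2)

@[simp]
theorem reflectY_reflectY (a : ℤ × ℤ) : reflectY (reflectY a) = a := by
  simp [reflectY]

theorem image_reflectY (X : Set (ℤ × ℤ)) : reflectY '' X = reflectY ⁻¹' X :=
  congrFun (Function.Involutive.image_eq_preimage_symm reflectY_reflectY) X

variable {prec : ℤ → ℤ → Prop} {p q : ℤ × ℤ}

-- On axis-parallel pairs the case split in `digSeg` is not symmetric under swapping or reflecting
-- the endpoints; the staircase is straight there, so the different branches agree.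
open Classical in
theorem digSegNE_of_fst_eq (h : p.1 = q.1) :
    digSegNE prec p q = {a | a.1 = p.1 ∧ p.2 ≤ a.2 ∧ a.2 ≤ q.2} := by
  have hcount (w : ℤ) (hpw : p.1 + p.2 ≤ w) (hwq : w ≤ q.1 + q.2) :
      (upCount prec p q w : ℤ) = w - (p.1 + p.2) := by
    have hall : ∀ t ∈ Ico (p.1 + p.2) w, upAt prec p q t := fun t _ => by
      have := (rankIn_le_card (prec := prec) (Ico (p.1 + p.2) (q.1 + q.2)) t).trans_eq
        (Int.card_Ico _ _)
      rw [upAt_iff_rankIn]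
      omega
    rw [upCount, filter_true_of_mem hall, Int.card_Ico]
    omega
  ext a
  rw [mem_digSegNE, Set.mem_ofPred_eq]
  constructor
  · rintro ⟨hpa, haq, ha2⟩
    have := hcount _ hpa haq
    omega
  · rintro ⟨ha1, hpa, haq⟩
    have := hcount (a.1 + a.2) (by omega) (by omega)
    omega

open Classical in
theorem digSegNE_of_snd_eq (h : p.2 = q.2) :
    digSegNE prec p q = {a | p.1 ≤ a.1 ∧ a.1 ≤ q.1 ∧ a.2 = p.2} := by
  have hcount (w : ℤ) (hwq : w ≤ q.1 + q.2) : upCount prec p q w = 0 := by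
    refine card_eq_zero.2 (filter_eq_empty_iff.2 fun t ht hup => ?_)
    have := rankIn_pos (prec := prec) (Ico_subset_Ico_right hwq ht)
    rw [upAt_iff_rankIn] at hup
    omega
  ext a
  rw [mem_digSegNE, Set.mem_ofPred_eq]
  constructor
  · rintro ⟨hpa, haq, ha2⟩
    rw [hcount _ haq] at ha2
    omega
  · rintro ⟨hpa, haq, ha2⟩
    exact ⟨by omega, by omega, by rw [hcount _ (by omega)]; omega⟩

theorem image_reflectY_digSegNE_of_fst_eq (h : p.1 = q.1) :
    reflectY '' digSegNE prec (reflectY p) (reflectY q) = digSegNE prec p q := by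
  rw [image_reflectY, digSegNE_of_fst_eq h,
    digSegNE_of_fst_eq (show (reflectY p).1 = (reflectY q).1 by simp [reflectY, h])]
  ext a
  simp only [reflectY, Set.mem_preimage, Set.mem_ofPred_eq]
  omega

theorem digSegNE_reflectY_of_snd_eq (h : p.2 = q.2) :
    digSegNE prec (reflectY q) (reflectY p) = reflectY '' digSegNE prec p q := by
  rw [image_reflectY, digSegNE_of_snd_eq h, digSegNE_of_snd_eq (by simp [reflectY, h])]
  ext a
  simp only [reflectY, Set.mem_preimage, Set.mem_ofPred_eq]
  omega

theorem digSeg_comm (p q : ℤ × ℤ) : digSeg prec p q = digSeg prec q p := by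
  rcases lt_trichotomy p.1 q.1 with h1 | h1 | h1
  · rw [digSeg, digSeg, if_pos h1.le, if_neg (not_le.2 h1)]
  · rw [digSeg, digSeg, if_pos h1.le, if_pos h1.ge, digSegAux, digSegAux]
    rcases lt_trichotomy p.2 q.2 with h2 | h2 | h2
    · rw [if_pos h2.le, if_neg (not_le.2 h2)]
      exact (image_reflectY_digSegNE_of_fst_eq h1).symm
    · rw [Prod.ext h1 h2]
    · rw [if_neg (not_le.2 h2), if_pos h2.le]
      exact image_reflectY_digSegNE_of_fst_eq h1.symm
  · rw [digSeg, digSeg, if_neg (not_le.2 h1), if_pos h1.le]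

theorem digSeg_of_le (h : p ≤ q) : digSeg prec p q = digSegNE prec p q := by
  rw [digSeg, if_pos h.1, digSegAux, if_pos h.2]

theorem digSeg_reflectY_of_le (h : p ≤ q) :
    digSeg prec (reflectY p) (reflectY q) = reflectY '' digSegNE prec p q := by
  obtain ⟨h1, h2⟩ := h
  rcases h1.lt_or_eq with h1 | h1
  · rw [digSeg, if_neg (by simp [reflectY]; omega), digSegAux]
    rcases h2.lt_or_eq with h2 | h2
    · rw [if_neg (by simp [reflectY]; omega)]
      simp only [reflectY, neg_neg, Prod.mk.eta]
      rfl
    · rw [if_pos (by simp [reflectY, h2])]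
      exact digSegNE_reflectY_of_snd_eq h2
  · rw [digSeg_of_le (p := reflectY p) (q := reflectY q) ⟨by simp [reflectY, h1], h2⟩,
      ← image_reflectY_digSegNE_of_fst_eq
      (show (reflectY p).1 = (reflectY q).1 by simp [reflectY, h1]), reflectY_reflectY,
      reflectY_reflectY]

theorem digSeg_reflectY (p q : ℤ × ℤ) :
    digSeg prec (reflectY p) (reflectY q) = reflectY '' digSeg prec p q := by
  wlog h1 : p.1 ≤ q.1 generalizing p q
  · rw [digSeg_comm, this q p (by omega), digSeg_comm]
  rcases le_or_gt p.2 q.2 with h2 | h2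
  · rw [digSeg_of_le ⟨h1, h2⟩]
    exact digSeg_reflectY_of_le ⟨h1, h2⟩
  · have hpq : digSeg prec p q = reflectY '' digSegNE prec (reflectY q) (reflectY p) := by
      rw [digSeg, if_pos h1, digSegAux, if_neg (not_le.2 h2)]
      rfl
    have hle : reflectY q ≤ reflectY p := ⟨neg_le_neg h1, h2.le⟩
    rw [hpq, Set.image_image]
    simp only [reflectY_reflectY, Set.image_id']
    rw [digSeg_comm, digSeg_of_le hle]

end Reflection

section Hausdorff

open Set

noncomputable def reflectYIsometry : EuclideanSpace ℝ (Fin 2) ≃ₗᵢ[ℝ] EuclideanSpace ℝ (Fin 2) :=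
  LinearIsometryEquiv.piLpCongrRight 2 ![LinearIsometryEquiv.neg ℝ, LinearIsometryEquiv.refl ℝ ℝ]

theorem toR2_reflectY (a : ℤ × ℤ) : toR2 (reflectY a) = reflectYIsometry (toR2 a) := by
  ext i
  fin_cases i <;> simp [toR2, reflectY, reflectYIsometry, LinearIsometryEquiv.piLpCongrRight_apply]

theorem ofLp_toR2_le_ofLp_toR2 {a b : ℤ × ℤ} : ofLp (toR2 a) ≤ ofLp (toR2 b) ↔ a ≤ b := by
  simp [toR2, Pi.le_def, Fin.forall_fin_two, Prod.le_def]

theorem monotone_ofLp_toR2 : Monotone fun a => ofLp (toR2 a) :=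
  fun _ _ => ofLp_toR2_le_ofLp_toR2.2

theorem image_toR2_inter_Icc (X : Set (ℤ × ℤ)) (r s : ℤ × ℤ) :
    toR2 '' (X ∩ Icc r s) = toR2 '' X ∩ ofLp ⁻¹' Icc (ofLp (toR2 r)) (ofLp (toR2 s)) := by
  rw [← image_inter_preimage]
  congr 2
  ext a
  simp only [mem_preimage, mem_Icc, ofLp_toR2_le_ofLp_toR2]

variable (prec : ℤ → ℤ → Prop)

noncomputable def hausdorffDistDigSeg (p q : ℤ × ℤ) : ℝ :=
  hausdorffDist (segment ℝ (toR2 p) (toR2 q)) (toR2 '' digSeg prec p q)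

variable {prec}

theorem hausdorffDistDigSeg_comm (p q : ℤ × ℤ) :
    hausdorffDistDigSeg prec p q = hausdorffDistDigSeg prec q p := by
  rw [hausdorffDistDigSeg, hausdorffDistDigSeg, segment_symm, digSeg_comm]

theorem hausdorffDistDigSeg_reflectY (p q : ℤ × ℤ) :
    hausdorffDistDigSeg prec (reflectY p) (reflectY q) = hausdorffDistDigSeg prec p q := by
  have himage : toR2 '' digSeg prec (reflectY p) (reflectY q) =
      reflectYIsometry '' (toR2 '' digSeg prec p q) := by
    simp only [digSeg_reflectY, image_image, toR2_reflectY]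
  have hsegment : segment ℝ (toR2 (reflectY p)) (toR2 (reflectY q)) =
      reflectYIsometry '' segment ℝ (toR2 p) (toR2 q) := by
    rw [toR2_reflectY, toR2_reflectY]
    exact (image_segment ℝ reflectYIsometry.toLinearEquiv.toLinearMap.toAffineMap _ _).symm
  rw [hausdorffDistDigSeg, hausdorffDistDigSeg, himage, hsegment,
    hausdorffDist_image reflectYIsometry.isometry]

theorem hausdorffDistDigSeg_le_of_le [IsTrans ℤ prec] [Std.Trichotomous prec] {p q r s : ℤ × ℤ}
    (hpq : p ≤ q) (hr : r ∈ digSeg prec p q) (hs : s ∈ digSeg prec p q) :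
    hausdorffDistDigSeg prec r s ≤ 2 * hausdorffDistDigSeg prec p q := by
  rw [digSeg_of_le hpq] at hr hs
  wlog hrs : r ≤ s generalizing r s
  · rw [hausdorffDistDigSeg_comm]
    exact this hs hr ((isChain_digSegNE.total hr hs).resolve_left hrs)
  rw [hausdorffDistDigSeg, hausdorffDistDigSeg, digSeg_of_le hpq, digSeg_of_le hrs,
    digSegNE_eq_inter_Icc hr hs hrs, image_toR2_inter_Icc]
  refine hausdorffDist_segment_inter_Icc_le (monotone_ofLp_toR2 hpq)
    (digSegNE_finite.image toR2).isCompact ?_ (mem_image_of_mem _ hr) (mem_image_of_mem _ hs)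
    (monotone_ofLp_toR2 hrs)
  rw [image_image]
  exact monotone_ofLp_toR2.isChain_image isChain_digSegNE

end Hausdorff

theorem hausdorff_subsegment (prec : ℤ → ℤ → Prop) [IsStrictTotalOrder ℤ prec]
    (p q r s : ℤ × ℤ) (hr : r ∈ digSeg prec p q) (hs : s ∈ digSeg prec p q) :
    Metric.hausdorffDist (segment ℝ (toR2 r) (toR2 s)) (toR2 '' digSeg prec r s) ≤
      2 * Metric.hausdorffDist (segment ℝ (toR2 p) (toR2 q)) (toR2 '' digSeg prec p q) := by
  change hausdorffDistDigSeg prec r s ≤ 2 * hausdorffDistDigSeg prec p q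
  wlog hpq : p.1 ≤ q.1 generalizing p q
  · rw [hausdorffDistDigSeg_comm p q]
    rw [digSeg_comm] at hr hs
    exact this q p hr hs (by omega)
  rcases le_or_gt p.2 q.2 with hpq2 | hqp2
  · exact hausdorffDistDigSeg_le_of_le ⟨hpq, hpq2⟩ hr hs
  have reflectY_mem {a : ℤ × ℤ} (ha : a ∈ digSeg prec p q) :
      reflectY a ∈ digSeg prec (reflectY q) (reflectY p) := by
    rw [digSeg_comm, digSeg_reflectY]
    exact Set.mem_image_of_mem _ ha
  rw [← hausdorffDistDigSeg_reflectY r s, ← hausdorffDistDigSeg_reflectY p q,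
    hausdorffDistDigSeg_comm (reflectY p)]
  exact hausdorffDistDigSeg_le_of_le ⟨neg_le_neg hpq, hqp2.le⟩ (reflectY_mem hr) (reflectY_mem hs)
end

section
/- There exist a consistent digital line segments system S and a constant c > 0 such that for all p,q ∈ ℤ², H(\overline{pq}, S(p,q)) ≤ c · log(|\overline{pq}| + 2), where |\overline{pq}| is the Euclidean distance between p and q. -/
/-!
For a strict total order `≺` on `ℤ`, the segment `S_≺(p, q)` with `p ≤ q` is the staircase
that, among the levels (sums of coordinates) between `p` and `q`, steps up exactly at the
`q.2 - p.2` largest ones for `≺`; segments of negative slope are read after a reflection. The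
largest elements of a set, intersected with a subset, are the largest elements of that subset,
so subsegments of staircases are again staircases, which gives the axioms of a CDS.

For the bit-reversal order the largest levels of an interval of length at most `2 ^ B` are the
levels above a pivot `t₀`: a disjoint union of `B` residue classes modulo `2, 4, …, 2 ^ B`,
plus at most one further level. Each residue class is counted by a linear function up to an
error `1`, so the staircase stays within `O(B) = O(log |pq|)` of the straight segment.
-/

open Finset

section TopSet

variable {α : Type*} [DecidableEq α] (r : α → α → Prop) [DecidableRel r]

/-- `upAt prec p q t` unfolds to `topRank prec (Ico (p.1 + p.2) (q.1 + q.2)) t ≤ q.2 - p.2`. -/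
def topRank (s : Finset α) (t : α) : ℕ := #(s.filter (fun u => u = t ∨ r t u))

def topSet (s : Finset α) (k : ℤ) : Finset α :=
  s.filter (fun t => (topRank r s t : ℤ) ≤ k)

variable {r} {s s' : Finset α} {t u : α} {k : ℤ}

lemma mem_topSet : t ∈ topSet r s k ↔ t ∈ s ∧ (topRank r s t : ℤ) ≤ k := mem_filter

lemma topSet_subset : topSet r s k ⊆ s := filter_subset _ _

lemma topRank_pos (ht : t ∈ s) : 0 < topRank r s t :=
  card_pos.mpr ⟨t, mem_filter.mpr ⟨ht, Or.inl rfl⟩⟩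

lemma topRank_le_card : topRank r s t ≤ #s := card_filter_le _ _

variable [IsStrictTotalOrder α r]

lemma topRank_lt_topRank (ht : t ∈ s) (h : r t u) : topRank r s u < topRank r s t := by
  refine card_lt_card ⟨fun v hv => ?_, fun hsub => ?_⟩
  · obtain ⟨hvs, rfl | huv⟩ := mem_filter.mp hv
    · exact mem_filter.mpr ⟨hvs, Or.inr h⟩
    · exact mem_filter.mpr ⟨hvs, Or.inr (trans_of r h huv)⟩
  · obtain ⟨-, rfl | hut⟩ := mem_filter.mp (hsub (mem_filter.mpr ⟨ht, Or.inl rfl⟩))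
    · exact irrefl_of r t h
    · exact asymm_of r h hut

lemma topRank_injOn : Set.InjOn (topRank r s) s := by
  intro t ht u hu h
  rcases trichotomous_of r t u with htu | rfl | hut
  · exact absurd h (topRank_lt_topRank ht htu).ne'
  · rfl
  · exact absurd h (topRank_lt_topRank hu hut).ne

lemma image_topRank : s.image (topRank r s) = Icc 1 #s :=
  eq_of_subset_of_card_le
    (fun m hm => by
      obtain ⟨t, ht, rfl⟩ := mem_image.mp hm
      exact mem_Icc.mpr ⟨topRank_pos ht, topRank_le_card⟩)
    (by rw [Nat.card_Icc, card_image_of_injOn topRank_injOn]; omega)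

lemma topSet_card_eq_of_upwardClosed {T : Finset α} (hT : T ⊆ s)
    (hup : ∀ t ∈ T, ∀ u ∈ s, r t u → u ∈ T) : topSet r s #T = T := by
  ext t
  rw [mem_topSet]
  refine ⟨fun ⟨hts, hle⟩ => ?_, fun htT => ⟨hT htT, ?_⟩⟩
  · by_contra htT
    have hsub : T ⊆ (s.filter (fun u => u = t ∨ r t u)).erase t := by
      intro u hu
      refine mem_erase.mpr ⟨fun h => htT (h ▸ hu), mem_filter.mpr ⟨hT hu, Or.inr ?_⟩⟩
      rcases trichotomous_of r t u with htu | rfl | hut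
      · exact htu
      · exact absurd hu htT
      · exact absurd (hup u hu t hts hut) htT
    have hcard := card_le_card hsub
    rw [card_erase_of_mem (mem_filter.mpr ⟨hts, Or.inl rfl⟩)] at hcard
    have := topRank_pos (r := r) hts
    unfold topRank at *
    omega
  · refine Nat.cast_le.mpr (card_le_card fun u hu => ?_)
    obtain ⟨hus, rfl | htu⟩ := mem_filter.mp hu
    · exact htT
    · exact hup t htT u hus htu

lemma topSet_upwardClosed : ∀ t ∈ topSet r s k, ∀ u ∈ s, r t u → u ∈ topSet r s k := by
  intro t ht u hu htu
  rw [mem_topSet] at ht ⊢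
  exact ⟨hu, le_trans (by exact_mod_cast (topRank_lt_topRank ht.1 htu).le) ht.2⟩

lemma topSet_inter_eq (hs : s' ⊆ s) :
    topSet r s' #(topSet r s k ∩ s') = topSet r s k ∩ s' :=
  topSet_card_eq_of_upwardClosed inter_subset_right fun t ht u hu htu =>
    mem_inter.mpr ⟨topSet_upwardClosed t (mem_inter.mp ht).1 u (hs hu) htu, hu⟩

lemma topSet_topRank (ht : t ∈ s) :
    topSet r s (topRank r s t) = s.filter (fun u => u = t ∨ r t u) :=
  topSet_card_eq_of_upwardClosed (filter_subset _ s) fun u hu v hv huv => by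
    obtain ⟨-, rfl | htu⟩ := mem_filter.mp hu
    · exact mem_filter.mpr ⟨hv, Or.inr huv⟩
    · exact mem_filter.mpr ⟨hv, Or.inr (trans_of r htu huv)⟩

lemma exists_topRank_eq (h0 : 0 < k) (hk : k ≤ #s) : ∃ t ∈ s, (topRank r s t : ℤ) = k := by
  obtain ⟨t, ht, hrk⟩ := mem_image.mp
    ((image_topRank (r := r) (s := s)).symm ▸ mem_Icc.mpr ⟨by omega, by omega⟩ :
      k.toNat ∈ _)
  exact ⟨t, ht, by omega⟩

lemma card_topSet (h0 : 0 ≤ k) (hk : k ≤ #s) : (#(topSet r s k) : ℤ) = k := by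
  obtain rfl | hpos := h0.eq_or_lt
  · rw [Nat.cast_eq_zero, card_eq_zero, eq_empty_iff_forall_notMem]
    intro t ht
    obtain ⟨hts, hle⟩ := mem_topSet.mp ht
    have := topRank_pos (r := r) hts
    omega
  · obtain ⟨t, ht, rfl⟩ := exists_topRank_eq (r := r) hpos hk
    rw [topSet_topRank ht]
    rfl

end TopSet


section Staircase

open Classical in
noncomputable def countIn (P : ℤ → Prop) (a c : ℤ) : ℕ := #((Ico a c).filter P)

/-- The monotone lattice path that starts at `p` and, from level `t` to level `t + 1` (the level
of a point being the sum of its coordinates), steps up if `P t` and right otherwise, stopped at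
level `b`. -/
def stair (P : ℤ → Prop) (p : ℤ × ℤ) (b : ℤ) : Set (ℤ × ℤ) :=
  {r | p.1 + p.2 ≤ r.1 + r.2 ∧ r.1 + r.2 ≤ b ∧
    r.2 = p.2 + countIn P (p.1 + p.2) (r.1 + r.2)}

noncomputable def stairPt (P : ℤ → Prop) (p : ℤ × ℤ) (s : ℤ) : ℤ × ℤ :=
  (s - p.2 - countIn P (p.1 + p.2) s, p.2 + countIn P (p.1 + p.2) s)

variable {P Q : ℤ → Prop} {p q r : ℤ × ℤ} {a b c d : ℤ}

lemma countIn_le : countIn P a c ≤ (c - a).toNat := by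
  classical
  exact (card_filter_le _ _).trans (Int.card_Ico a c).le

lemma countIn_of_le (h : c ≤ a) : countIn P a c = 0 := by
  classical
  simp [countIn, Ico_eq_empty_of_le h]

lemma countIn_add (hac : a ≤ c) (hcd : c ≤ d) :
    countIn P a c + countIn P c d = countIn P a d := by
  classical
  rw [countIn, countIn, countIn, ← card_union_of_disjoint
    (disjoint_filter_filter (Ico_disjoint_Ico_consecutive a c d)), ← filter_union,
    Ico_union_Ico_eq_Ico hac hcd]

lemma countIn_congr (h : ∀ t ∈ Ico a c, P t ↔ Q t) : countIn P a c = countIn Q a c := by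
  classical
  exact congrArg card (filter_congr h)

lemma countIn_self_add_one [Decidable (P c)] : countIn P c (c + 1) = if P c then 1 else 0 := by
  classical
  have : Ico c (c + 1) = {c} := by ext; simp only [mem_Ico, mem_singleton]; omega
  rw [countIn, this, filter_singleton]
  split_ifs <;> simp

lemma stairPt_add (p : ℤ × ℤ) (s : ℤ) : (stairPt P p s).1 + (stairPt P p s).2 = s := by
  simp only [stairPt]; ring

lemma stairPt_mem (h1 : p.1 + p.2 ≤ c) (h2 : c ≤ b) : stairPt P p c ∈ stair P p b :=
  ⟨(stairPt_add p c).symm ▸ h1, (stairPt_add p c).symm ▸ h2, by rw [stairPt_add]; rfl⟩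

lemma eq_stairPt_of_mem (hr : r ∈ stair P p b) : r = stairPt P p (r.1 + r.2) := by
  obtain ⟨-, -, h⟩ := hr
  ext <;> simp only [stairPt] <;> omega

lemma stair_eq_image : stair P p b = stairPt P p '' Set.Icc (p.1 + p.2) b := by
  ext r
  refine ⟨fun hr => ⟨r.1 + r.2, ⟨hr.1, hr.2.1⟩, (eq_stairPt_of_mem hr).symm⟩, ?_⟩
  rintro ⟨s, ⟨h1, h2⟩, rfl⟩
  exact stairPt_mem h1 h2

lemma stair_mono (h : c ≤ b) : stair P p c ⊆ stair P p b :=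
  fun _ ⟨h1, h2, h3⟩ => ⟨h1, h2.trans h, h3⟩

lemma stair_subset_of_mem (hr : r ∈ stair P p b) : stair P r b ⊆ stair P p b := by
  obtain ⟨hr1, -, hr3⟩ := hr
  rintro x ⟨hx1, hx2, hx3⟩
  refine ⟨hr1.trans hx1, hx2, ?_⟩
  rw [← countIn_add hr1 hx1]
  push_cast
  omega

lemma stair_congr (h : ∀ t ∈ Ico (p.1 + p.2) b, P t ↔ Q t) : stair P p b = stair Q p b := by
  ext r
  refine and_congr_right fun h1 => and_congr_right fun h2 => ?_
  rw [countIn_congr fun t ht => h t (Ico_subset_Ico_right h2 ht)]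

lemma le_of_mem_stair (hr : r ∈ stair P p b) (hq : q ∈ stair P p b)
    (h : r.1 + r.2 ≤ q.1 + q.2) : r ≤ q := by
  obtain ⟨hr1, -, hr3⟩ := hr
  obtain ⟨-, -, hq3⟩ := hq
  have := countIn_add (P := P) hr1 h
  have := countIn_le (P := P) (a := r.1 + r.2) (c := q.1 + q.2)
  exact Prod.mk_le_mk.mpr ⟨by omega, by omega⟩

lemma self_mem_stair (h : p.1 + p.2 ≤ b) : p ∈ stair P p b :=
  ⟨le_rfl, h, by rw [countIn_of_le le_rfl]; ring⟩

lemma self_le_of_mem_stair (hr : r ∈ stair P p b) : p ≤ r :=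
  le_of_mem_stair (self_mem_stair (hr.1.trans hr.2.1)) hr hr.1

lemma stair_eq_Icc (hq : q ∈ stair P p b) (hpq : p.1 = q.1 ∨ p.2 = q.2) :
    stair P p (q.1 + q.2) = Set.Icc p q := by
  have hq' : q ∈ stair P p (q.1 + q.2) := ⟨hq.1, le_rfl, hq.2.2⟩
  ext x
  refine ⟨fun hx => ⟨self_le_of_mem_stair hx, le_of_mem_stair hx hq' hx.2.1⟩, ?_⟩
  rintro ⟨hpx, hxq⟩
  obtain ⟨hpx1, hpx2⟩ := Prod.mk_le_mk.mp hpx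
  obtain ⟨hxq1, hxq2⟩ := Prod.mk_le_mk.mp hxq
  obtain ⟨-, -, hq3⟩ := hq
  have hadd := countIn_add (P := P) (show p.1 + p.2 ≤ x.1 + x.2 by omega)
    (show x.1 + x.2 ≤ q.1 + q.2 by omega)
  have := countIn_le (P := P) (a := p.1 + p.2) (c := x.1 + x.2)
  have := countIn_le (P := P) (a := x.1 + x.2) (c := q.1 + q.2)
  exact ⟨by omega, by omega, by omega⟩

lemma gridAdj_stairPt (h : p.1 + p.2 ≤ c) : GridAdj (stairPt P p c) (stairPt P p (c + 1)) := by
  classical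
  have hadd := countIn_add (P := P) h (Int.le_add_one le_rfl)
  rw [countIn_self_add_one] at hadd
  simp only [GridAdj, stairPt, abs_eq zero_le_one]
  split_ifs at hadd <;> omega

lemma isGridPath_stair (hq : q ∈ stair P p b) : IsGridPath p q (stair P p (q.1 + q.2)) := by
  have hq1 := hq.1
  refine ⟨(q.1 + q.2 - (p.1 + p.2)).toNat, fun j => stairPt P p (p.1 + p.2 + j), ?_, ?_,
    fun i j hij => ?_, fun i => ?_, ?_⟩
  · simpa using (eq_stairPt_of_mem (self_mem_stair (P := P) hq1)).symm
  · simpa [Int.toNat_of_nonneg (sub_nonneg.mpr hq1)] using (eq_stairPt_of_mem hq).symm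
  · have := congrArg (fun r => r.1 + r.2) hij
    simp only [stairPt_add] at this
    omega
  · simpa [add_assoc] using gridAdj_stairPt (P := P) (p := p) (c := p.1 + p.2 + i)
      (by omega)
  · rw [stair_eq_image]
    ext r
    constructor
    · rintro ⟨j, rfl⟩
      exact ⟨_, ⟨by omega, by have := j.isLt; omega⟩, rfl⟩
    · rintro ⟨s, ⟨h1, h2⟩, rfl⟩
      refine ⟨⟨(s - (p.1 + p.2)).toNat, by omega⟩, ?_⟩
      simp only
      congr 1
      omega

end Staircase

section MonotoneSegment

open Classical

variable {prec : ℤ → ℤ → Prop} {p q r s : ℤ × ℤ} {t : ℤ}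

lemma digSegNE_eq_stair : digSegNE prec p q = stair (upAt prec p q) p (q.1 + q.2) := rfl

lemma upAt_of_upAt {p' q' : ℤ × ℤ} (hp : p.1 + p.2 = p'.1 + p'.2)
    (hq : q.1 + q.2 = q'.1 + q'.2) (hk : q.2 - p.2 ≤ q'.2 - p'.2) (h : upAt prec p q t) :
    upAt prec p' q' t := by
  unfold upAt at *
  rw [← hp, ← hq]
  omega

lemma filter_upAt_eq {c d : ℤ} (hc : p.1 + p.2 ≤ c) (hd : d ≤ q.1 + q.2) :
    (Ico c d).filter (upAt prec p q) =
      topSet prec (Ico (p.1 + p.2) (q.1 + q.2)) (q.2 - p.2) ∩ Ico c d := by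
  ext t
  simp only [mem_filter, mem_inter, mem_topSet, mem_Ico]
  constructor
  · rintro ⟨⟨h1, h2⟩, h3⟩
    exact ⟨⟨⟨by omega, by omega⟩, h3⟩, h1, h2⟩
  · rintro ⟨⟨-, h3⟩, h1, h2⟩
    exact ⟨⟨h1, h2⟩, h3⟩

lemma not_upAt (h : p.2 = q.2) (ht : t ∈ Ico (p.1 + p.2) (q.1 + q.2)) : ¬ upAt prec p q t := by
  have := topRank_pos (r := prec) ht
  show ¬ (topRank prec _ t : ℤ) ≤ q.2 - p.2
  omega

variable [IsStrictTotalOrder ℤ prec]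

lemma countIn_upAt (h : p ≤ q) :
    (countIn (upAt prec p q) (p.1 + p.2) (q.1 + q.2) : ℤ) = q.2 - p.2 := by
  obtain ⟨h1, h2⟩ := Prod.mk_le_mk.mp h
  rw [countIn, filter_upAt_eq le_rfl le_rfl, inter_eq_left.mpr topSet_subset,
    card_topSet (by omega) (by rw [Int.card_Ico]; omega)]

/-- `hk` says that `s` lies on the staircase of `upAt prec p q` started at `r`; the segment from
`r` to `s` then steps up at the same levels. -/
lemma upAt_iff_upAt (hr : p.1 + p.2 ≤ r.1 + r.2) (hs : s.1 + s.2 ≤ q.1 + q.2)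
    (hk : s.2 - r.2 = countIn (upAt prec p q) (r.1 + r.2) (s.1 + s.2))
    (ht : t ∈ Ico (r.1 + r.2) (s.1 + s.2)) : upAt prec r s t ↔ upAt prec p q t := by
  have hsub : Ico (r.1 + r.2) (s.1 + s.2) ⊆ Ico (p.1 + p.2) (q.1 + q.2) :=
    Ico_subset_Ico hr hs
  have key := topSet_inter_eq (r := prec) (k := q.2 - p.2) hsub
  rw [← filter_upAt_eq hr hs] at key
  have := congrArg (t ∈ ·) key
  simp only [mem_topSet, mem_filter, ht, true_and, eq_iff_iff] at this
  rw [← this]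
  show (topRank prec _ t : ℤ) ≤ s.2 - r.2 ↔ _
  rw [hk]
  rfl

lemma mem_digSegNE_right (h : p ≤ q) : q ∈ digSegNE prec p q := by
  obtain ⟨h1, h2⟩ := Prod.mk_le_mk.mp h
  show q ∈ stair _ _ _
  exact ⟨by omega, le_rfl, by rw [countIn_upAt h]; ring⟩

lemma isGridPath_digSegNE (h : p ≤ q) : IsGridPath p q (digSegNE prec p q) :=
  isGridPath_stair (mem_digSegNE_right h)

lemma le_of_mem_digSegNE_s7 (h : p ≤ q) (hr : r ∈ digSegNE prec p q) : p ≤ r ∧ r ≤ q :=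
  ⟨self_le_of_mem_stair hr, le_of_mem_stair hr (mem_digSegNE_right h) hr.2.1⟩

lemma digSegNE_eq_Icc (h : p ≤ q) (hpq : p.1 = q.1 ∨ p.2 = q.2) :
    digSegNE prec p q = Set.Icc p q :=
  stair_eq_Icc (mem_digSegNE_right h) hpq

lemma digSegNE_subset_left (hr : r ∈ digSegNE prec p q) :
    digSegNE prec p r ⊆ digSegNE prec p q := by
  rw [digSegNE_eq_stair] at hr ⊢
  obtain ⟨hr1, hr2, hr3⟩ := hr
  rw [digSegNE_eq_stair, stair_congr fun t ht => upAt_iff_upAt le_rfl hr2 (by omega) ht]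
  exact stair_mono hr2

lemma digSegNE_subset_right (h : p ≤ q) (hr : r ∈ digSegNE prec p q) :
    digSegNE prec r q ⊆ digSegNE prec p q := by
  rw [digSegNE_eq_stair] at hr ⊢
  obtain ⟨hr1, hr2, hr3⟩ := hr
  have hadd := countIn_add (P := upAt prec p q) hr1 hr2
  have hpq := countIn_upAt (prec := prec) h
  rw [digSegNE_eq_stair, stair_congr fun t ht => upAt_iff_upAt hr1 le_rfl (by omega) ht]
  exact stair_subset_of_mem ⟨hr1, hr2, hr3⟩

lemma exists_digSegNE_extend_right (h : p ≤ q) :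
    ∃ r, q ≤ r ∧ r ∉ digSegNE prec p q ∧ digSegNE prec p q ⊆ digSegNE prec p r := by
  obtain ⟨h1, h2⟩ := Prod.mk_le_mk.mp h
  -- step up from `q` iff the new level `q.1 + q.2` is an up-level of the longer segment; this is
  -- consistent because raising the endpoint can only turn levels into up-levels
  obtain ⟨r, hqr, hlev, hb⟩ : ∃ r : ℤ × ℤ, q ≤ r ∧ r.1 + r.2 = q.1 + q.2 + 1 ∧
      r.2 = q.2 + if upAt prec p r (q.1 + q.2) then 1 else 0 := by
    by_cases hup : upAt prec p (q.1 + 1, q.2) (q.1 + q.2)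
    · refine ⟨(q.1, q.2 + 1), Prod.mk_le_mk.mpr ⟨le_rfl, by omega⟩, by simp only; ring, ?_⟩
      rw [if_pos (upAt_of_upAt rfl (by simp only; ring) (by simp only; omega) hup)]
    · exact ⟨(q.1 + 1, q.2), Prod.mk_le_mk.mpr ⟨by omega, le_rfl⟩, by simp only; ring,
        by rw [if_neg hup]; simp⟩
  have hpr : p ≤ r := h.trans hqr
  have hadd := countIn_add (P := upAt prec p r) (show p.1 + p.2 ≤ q.1 + q.2 by omega)
    (show q.1 + q.2 ≤ q.1 + q.2 + 1 by omega)
  rw [countIn_self_add_one, ← hlev] at hadd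
  have hcount := countIn_upAt (prec := prec) hpr
  refine ⟨r, hqr, fun hr => by have := hr.2.1; omega, digSegNE_subset_left
    (show q ∈ stair (upAt prec p r) p (r.1 + r.2) from ⟨by omega, by omega, ?_⟩)⟩
  split_ifs at hb hadd <;> omega

lemma exists_digSegNE_extend_left (h : p ≤ q) :
    ∃ r, r ≤ p ∧ r ∉ digSegNE prec p q ∧ digSegNE prec p q ⊆ digSegNE prec r q := by
  obtain ⟨h1, h2⟩ := Prod.mk_le_mk.mp h
  obtain ⟨r, hrp, hlev, hb⟩ : ∃ r : ℤ × ℤ, r ≤ p ∧ r.1 + r.2 + 1 = p.1 + p.2 ∧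
      p.2 = r.2 + if upAt prec r q (r.1 + r.2) then 1 else 0 := by
    by_cases hup : upAt prec (p.1 - 1, p.2) q (p.1 - 1 + p.2)
    · refine ⟨(p.1, p.2 - 1), Prod.mk_le_mk.mpr ⟨le_rfl, by omega⟩, by simp only; ring, ?_⟩
      have hup' : upAt prec (p.1, p.2 - 1) q (p.1 + (p.2 - 1)) := by
        rw [show p.1 + (p.2 - 1) = p.1 - 1 + p.2 by ring]
        exact upAt_of_upAt (by simp only; ring) rfl (by simp only; omega) hup
      rw [if_pos hup']
      ring
    · exact ⟨(p.1 - 1, p.2), Prod.mk_le_mk.mpr ⟨by omega, le_rfl⟩, by simp only; ring,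
        by rw [if_neg hup]; simp⟩
  have hp : p ∈ digSegNE prec r q := by
    show p ∈ stair _ _ _
    refine ⟨by omega, by omega, ?_⟩
    rw [← hlev, countIn_self_add_one]
    split_ifs at hb ⊢ <;> simp only [Nat.cast_one, Nat.cast_zero] <;> omega
  exact ⟨r, hrp, fun hr => by have := hr.1; omega,
    digSegNE_subset_right (hrp.trans h) hp⟩

lemma exists_upAt_iff (h : p ≤ q) (hk : p.2 < q.2) :
    ∃ t₀, ∀ t ∈ Ico (p.1 + p.2) (q.1 + q.2), upAt prec p q t ↔ t = t₀ ∨ prec t₀ t := by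
  obtain ⟨h1, h2⟩ := Prod.mk_le_mk.mp h
  obtain ⟨t₀, ht₀, hrk⟩ := exists_topRank_eq (r := prec) (s := Ico (p.1 + p.2) (q.1 + q.2))
    (k := q.2 - p.2) (by omega) (by rw [Int.card_Ico]; omega)
  refine ⟨t₀, fun t ht => ?_⟩
  have := congrArg (t ∈ ·) (topSet_topRank (r := prec) ht₀)
  simp only [hrk, mem_topSet, mem_filter, ht, true_and, eq_iff_iff] at this
  exact this

end MonotoneSegment

section GridPath

lemma GridAdj.symm {p q : ℤ × ℤ} (h : GridAdj p q) : GridAdj q p := by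
  unfold GridAdj at *
  rw [abs_sub_comm p.1, abs_sub_comm p.2]
  omega

lemma IsGridPath.reverse {p q : ℤ × ℤ} {S : Set (ℤ × ℤ)} (h : IsGridPath p q S) :
    IsGridPath q p S := by
  obtain ⟨n, f, h0, hn, hinj, hadj, rfl⟩ := h
  refine ⟨n, f ∘ Fin.rev, by simpa using hn, by simpa using h0, hinj.comp Fin.rev_injective,
    fun i => ?_, Fin.rev_surjective.range_comp f⟩
  simpa [Fin.rev_castSucc, Fin.rev_succ] using (hadj (Fin.rev i)).symm

lemma IsGridPath.image {p q : ℤ × ℤ} {S : Set (ℤ × ℤ)} {f : ℤ × ℤ → ℤ × ℤ}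
    (hf : Function.Injective f) (hadj : ∀ x y, GridAdj x y → GridAdj (f x) (f y))
    (h : IsGridPath p q S) : IsGridPath (f p) (f q) (f '' S) := by
  obtain ⟨n, g, h0, hn, hinj, hg, rfl⟩ := h
  exact ⟨n, f ∘ g, by simp [h0], by simp [hn], hf.comp hinj, fun i => hadj _ _ (hg i),
    Set.range_comp f g⟩

end GridPath

section FullSystem

/-- The reflection in the vertical axis, which `digSeg` uses for segments of negative slope. -/
def mirror (r : ℤ × ℤ) : ℤ × ℤ := (-r.1, r.2)

lemma mirror_involutive : Function.Involutive mirror := fun r => by simp [mirror]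

lemma gridAdj_mirror {x y : ℤ × ℤ} (h : GridAdj x y) : GridAdj (mirror x) (mirror y) := by
  unfold GridAdj mirror at *
  rw [show -y.1 - -x.1 = -(y.1 - x.1) by ring, abs_neg]
  simpa using h

variable {σ τ : ℤ × ℤ → ℤ × ℤ} {p q r u v u' v' : ℤ × ℤ}

/-- The two orientations: `digSeg` reads a segment as monotone either directly or after
`mirror`. -/
def IsOrientation (σ : ℤ × ℤ → ℤ × ℤ) : Prop := σ = id ∨ σ = mirror

lemma IsOrientation.involutive (hσ : IsOrientation σ) : Function.Involutive σ := by
  rcases hσ with rfl | rfl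
  exacts [fun _ => rfl, mirror_involutive]

lemma IsOrientation.isGridPath_image (hσ : IsOrientation σ) {S : Set (ℤ × ℤ)}
    (h : IsGridPath p q S) : IsGridPath (σ p) (σ q) (σ '' S) := by
  refine h.image hσ.involutive.injective ?_
  rcases hσ with rfl | rfl
  exacts [fun _ _ h => h, fun _ _ => gridAdj_mirror]

lemma IsOrientation.image_Icc (hσ : IsOrientation σ) (h : σ u ≤ σ v) :
    σ '' Set.Icc (σ u) (σ v) = Set.uIcc u v := by
  rw [hσ.involutive.image_eq_preimage_symm]
  ext r
  simp only [Set.mem_preimage, Set.mem_Icc, Set.uIcc_prod_eq, Set.mem_prod, Set.mem_uIcc,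
    Prod.le_def]
  rcases hσ with rfl | rfl <;> simp only [id, mirror, Prod.le_def] at h ⊢ <;> omega

variable {prec : ℤ → ℤ → Prop} [IsStrictTotalOrder ℤ prec]

lemma IsOrientation.image_digSegNE_eq_uIcc (hσ : IsOrientation σ) (h : σ u ≤ σ v)
    (huv : u.1 = v.1 ∨ u.2 = v.2) : σ '' digSegNE prec (σ u) (σ v) = Set.uIcc u v := by
  rw [digSegNE_eq_Icc h, hσ.image_Icc h]
  rcases hσ with rfl | rfl <;> simpa [mirror] using huv

/-- The readings of a segment in the two orientations agree: they can only both be monotone when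
the segment is axis-parallel, and then both are the box spanned by the endpoints. -/
lemma image_digSegNE_eq (hσ : IsOrientation σ) (hτ : IsOrientation τ) (h : σ u ≤ σ v)
    (h' : τ u' ≤ τ v') (huv : s(u, v) = s(u', v')) :
    σ '' digSegNE prec (σ u) (σ v) = τ '' digSegNE prec (τ u') (τ v') := by
  by_cases hax : u.1 = v.1 ∨ u.2 = v.2
  · have hax' : u'.1 = v'.1 ∨ u'.2 = v'.2 := by
      rcases Sym2.eq_iff.mp huv with ⟨rfl, rfl⟩ | ⟨rfl, rfl⟩ <;> omega
    rw [hσ.image_digSegNE_eq_uIcc h hax, hτ.image_digSegNE_eq_uIcc h' hax']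
    rcases Sym2.eq_iff.mp huv with ⟨rfl, rfl⟩ | ⟨rfl, rfl⟩
    exacts [rfl, Set.uIcc_comm _ _]
  · obtain ⟨rfl, rfl, rfl⟩ : σ = τ ∧ u = u' ∧ v = v' := by
      rcases Sym2.eq_iff.mp huv with ⟨rfl, rfl⟩ | ⟨rfl, rfl⟩ <;>
        rcases hσ with rfl | rfl <;> rcases hτ with rfl | rfl <;>
        simp only [id, mirror, Prod.le_def] at h h' <;> first | exact ⟨rfl, rfl, rfl⟩ | omega
    rfl

lemma digSeg_eq_image (hσ : IsOrientation σ) (h : σ u ≤ σ v) (huv : s(u, v) = s(p, q)) :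
    digSeg prec p q = σ '' digSegNE prec (σ u) (σ v) := by
  unfold digSeg digSegAux
  split_ifs with h1 h2 h2
  · exact (Set.image_id _).symm.trans
      (image_digSegNE_eq (Or.inl rfl) hσ (Prod.mk_le_mk.mpr ⟨h1, h2⟩) h huv.symm)
  · exact image_digSegNE_eq (u := q) (v := p) (Or.inr rfl) hσ
      (Prod.mk_le_mk.mpr ⟨by omega, by omega⟩) h
      (by rw [huv, Sym2.eq_swap])
  · exact (Set.image_id _).symm.trans (image_digSegNE_eq (Or.inl rfl) hσ
      (Prod.mk_le_mk.mpr ⟨by omega, h2⟩) h (by rw [huv, Sym2.eq_swap]))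
  · exact image_digSegNE_eq (u := p) (v := q) (Or.inr rfl) hσ
      (Prod.mk_le_mk.mpr ⟨by omega, by omega⟩) h
      huv.symm

lemma exists_digSeg_eq_image (prec : ℤ → ℤ → Prop) [IsStrictTotalOrder ℤ prec]
    (p q : ℤ × ℤ) :
    ∃ σ u v, IsOrientation σ ∧ s(u, v) = s(p, q) ∧ σ u ≤ σ v ∧
      digSeg prec p q = σ '' digSegNE prec (σ u) (σ v) := by
  obtain ⟨σ, u, v, hσ, huv, h⟩ :
      ∃ σ u v, IsOrientation σ ∧ s(u, v) = s(p, q) ∧ σ u ≤ σ v := by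
    rcases le_total p.1 q.1 with h1 | h1 <;> rcases le_total p.2 q.2 with h2 | h2
    · exact ⟨id, p, q, Or.inl rfl, rfl, Prod.mk_le_mk.mpr ⟨h1, h2⟩⟩
    · exact ⟨mirror, q, p, Or.inr rfl, Sym2.eq_swap,
        Prod.mk_le_mk.mpr ⟨by omega, h2⟩⟩
    · exact ⟨mirror, p, q, Or.inr rfl, rfl,
        Prod.mk_le_mk.mpr ⟨by omega, h2⟩⟩
    · exact ⟨id, q, p, Or.inl rfl, Sym2.eq_swap, Prod.mk_le_mk.mpr ⟨h1, h2⟩⟩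
  exact ⟨σ, u, v, hσ, huv, h, digSeg_eq_image hσ h huv⟩

lemma digSeg_eq_uIcc (hpq : p.1 = q.1 ∨ p.2 = q.2) : digSeg prec p q = Set.uIcc p q := by
  obtain ⟨σ, u, v, hσ, huv, h, heq⟩ := exists_digSeg_eq_image prec p q
  rcases Sym2.eq_iff.mp huv with ⟨rfl, rfl⟩ | ⟨rfl, rfl⟩
  · rw [heq, hσ.image_digSegNE_eq_uIcc h hpq]
  · rw [heq, hσ.image_digSegNE_eq_uIcc h (by omega), Set.uIcc_comm]

lemma digSeg_subset_of_mem (hr : r ∈ digSeg prec p q) : digSeg prec p r ⊆ digSeg prec p q := by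
  obtain ⟨σ, u, v, hσ, huv, h, heq⟩ := exists_digSeg_eq_image prec p q
  rw [heq] at hr ⊢
  obtain ⟨x, hx, rfl⟩ := hr
  have hle := le_of_mem_digSegNE_s7 h hx
  rcases Sym2.eq_iff.mp huv with ⟨rfl, rfl⟩ | ⟨rfl, rfl⟩
  · rw [digSeg_eq_image hσ (u := u) (v := σ x) (by rw [hσ.involutive]; exact hle.1) rfl,
      hσ.involutive]
    exact Set.image_mono (digSegNE_subset_left hx)
  · rw [digSeg_eq_image hσ (u := σ x) (v := v) (by rw [hσ.involutive]; exact hle.2)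
      Sym2.eq_swap, hσ.involutive]
    exact Set.image_mono (digSegNE_subset_right h hx)

lemma exists_digSeg_extend (p q : ℤ × ℤ) :
    ∃ r, r ∉ digSeg prec p q ∧ digSeg prec p q ⊆ digSeg prec p r := by
  obtain ⟨σ, u, v, hσ, huv, h, heq⟩ := exists_digSeg_eq_image prec p q
  rcases Sym2.eq_iff.mp huv with ⟨rfl, rfl⟩ | ⟨rfl, rfl⟩
  · obtain ⟨r, hvr, hr, hsub⟩ := exists_digSegNE_extend_right (prec := prec) h
    refine ⟨σ r, by rwa [heq, hσ.involutive.injective.mem_set_image], ?_⟩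
    rw [heq, digSeg_eq_image hσ (u := u) (v := σ r) (by rw [hσ.involutive]; exact h.trans hvr)
      rfl, hσ.involutive]
    exact Set.image_mono hsub
  · obtain ⟨r, hru, hr, hsub⟩ := exists_digSegNE_extend_left (prec := prec) h
    refine ⟨σ r, by rwa [heq, hσ.involutive.injective.mem_set_image], ?_⟩
    rw [heq, digSeg_eq_image hσ (u := σ r) (v := v) (by rw [hσ.involutive]; exact hru.trans h)
      Sym2.eq_swap, hσ.involutive]
    exact Set.image_mono hsub

variable (prec) in
theorem isCDS_digSeg : IsCDS (digSeg prec) where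
  path p q := by
    obtain ⟨σ, u, v, hσ, huv, h, heq⟩ := exists_digSeg_eq_image prec p q
    have hpath := hσ.isGridPath_image (isGridPath_digSegNE (prec := prec) h)
    rw [hσ.involutive u, hσ.involutive v, ← heq] at hpath
    rcases Sym2.eq_iff.mp huv with ⟨rfl, rfl⟩ | ⟨rfl, rfl⟩
    exacts [hpath, hpath.reverse]
  symm p q := by
    obtain ⟨σ, u, v, hσ, huv, h, heq⟩ := exists_digSeg_eq_image prec p q
    rw [heq, digSeg_eq_image hσ h (huv.trans Sym2.eq_swap)]
  subseg _ _ _ := digSeg_subset_of_mem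
  prolong := exists_digSeg_extend
  monoV p q h r hr := by
    rw [digSeg_eq_uIcc (Or.inl h), Set.uIcc_prod_eq, Set.mem_prod, Set.mem_uIcc,
      Set.mem_uIcc] at hr
    omega
  monoH p q h r hr := by
    rw [digSeg_eq_uIcc (Or.inr h), Set.uIcc_prod_eq, Set.mem_prod, Set.mem_uIcc,
      Set.mem_uIcc] at hr
    omega

end FullSystem

section BitReversal

lemma emod_two_pow_emod_two_pow (x : ℤ) {i j : ℕ} (h : i ≤ j) :
    x % 2 ^ j % 2 ^ i = x % 2 ^ i :=
  Int.emod_emod_of_dvd x (pow_dvd_pow 2 h)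

lemma emod_two_pow_succ (x : ℤ) (i : ℕ) :
    x % 2 ^ (i + 1) = x % 2 ^ i ∨ x % 2 ^ (i + 1) = x % 2 ^ i + 2 ^ i := by
  have hm : (0 : ℤ) < 2 ^ i := by positivity
  have hlow := emod_two_pow_emod_two_pow x (by omega : i ≤ i + 1)
  have hdecomp := Int.emod_add_mul_ediv (x % 2 ^ (i + 1)) (2 ^ i)
  have h0 : 0 ≤ x % 2 ^ (i + 1) / 2 ^ i :=
    Int.ediv_nonneg (Int.emod_nonneg _ (by positivity)) hm.le
  have h2 : x % 2 ^ (i + 1) / 2 ^ i < 2 :=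
    Int.ediv_lt_of_lt_mul hm (by rw [← pow_succ']; exact Int.emod_lt_of_pos _ (by positivity))
  rcases (by omega : x % 2 ^ (i + 1) / 2 ^ i = 0 ∨ x % 2 ^ (i + 1) / 2 ^ i = 1) with h | h <;>
    rw [h, hlow] at hdecomp
  · left; linarith
  · right; linarith

variable {t u v : ℤ} {i j : ℕ}

/-- The hypothesis `h` says that `u` is `t` with its binary digit `j` turned from `0` to `1`
and the lower digits kept. -/
lemma emod_two_pow_eq_of_flip (h : u % 2 ^ (j + 1) = t % 2 ^ (j + 1) + 2 ^ j) (hij : i ≤ j) :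
    u % 2 ^ i = t % 2 ^ i := by
  obtain ⟨c, hc⟩ : (2 : ℤ) ^ i ∣ 2 ^ j := pow_dvd_pow 2 hij
  rw [← emod_two_pow_emod_two_pow u (hij.trans j.le_succ), h, hc, Int.add_mul_emod_self_left,
    emod_two_pow_emod_two_pow t (hij.trans j.le_succ)]

lemma emod_two_pow_ne_of_flip (h : u % 2 ^ (j + 1) = t % 2 ^ (j + 1) + 2 ^ j) (hij : j < i) :
    u % 2 ^ i ≠ t % 2 ^ i := by
  intro he
  have := congrArg (· % 2 ^ (j + 1)) he
  simp only [emod_two_pow_emod_two_pow _ (by omega : j + 1 ≤ i)] at this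
  have : (0 : ℤ) < 2 ^ j := by positivity
  omega

/-- The bit-reversal (van der Corput) order: `t ≺ u` iff at the lowest binary digit where `t` and
`u` differ, `t` has a `0` and `u` a `1`. -/
def bitRevLT (t u : ℤ) : Prop := ∃ i : ℕ, u % 2 ^ (i + 1) = t % 2 ^ (i + 1) + 2 ^ i

instance : IsStrictTotalOrder ℤ bitRevLT where
  irrefl t := fun ⟨i, h⟩ => by have : (0 : ℤ) < 2 ^ i := (by positivity); omega
  trans t u v := by
    rintro ⟨i, hi⟩ ⟨j, hj⟩
    rcases lt_trichotomy i j with hij | rfl | hij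
    · exact ⟨i, by rw [emod_two_pow_eq_of_flip hj (Nat.succ_le_of_lt hij), hi]⟩
    · have := Int.emod_lt_of_pos v (by positivity : (0 : ℤ) < 2 ^ (i + 1))
      have := Int.emod_nonneg t (by positivity : (2 : ℤ) ^ (i + 1) ≠ 0)
      rw [pow_succ] at *
      omega
    · exact ⟨j, by rw [hj, emod_two_pow_eq_of_flip hi (Nat.succ_le_of_lt hij)]⟩
  trichotomous t u htu hut := by
    by_contra hne
    have hex : ∃ i : ℕ, t % 2 ^ i ≠ u % 2 ^ i := by
      refine ⟨(t - u).natAbs, fun h => hne ?_⟩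
      have hdvd : (2 : ℤ) ^ (t - u).natAbs ∣ t - u := (Int.ModEq.dvd h.symm)
      have hlt : |t - u| < 2 ^ (t - u).natAbs := by
        rw [Int.abs_eq_natAbs]; exact_mod_cast Nat.lt_two_pow_self
      linarith [Int.eq_zero_of_abs_lt_dvd hdvd hlt]
    obtain ⟨j, hj⟩ : ∃ j, Nat.find hex = j + 1 :=
      Nat.exists_eq_succ_of_ne_zero fun h0 => Nat.find_spec hex (by rw [h0]; simp)
    have hne' := Nat.find_spec hex
    have hlow : t % 2 ^ j = u % 2 ^ j := not_not.mp (Nat.find_min hex (by omega))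
    rw [hj] at hne'
    rcases emod_two_pow_succ t j with ht | ht <;> rcases emod_two_pow_succ u j with hu | hu
    · exact hne' (by rw [ht, hu, hlow])
    · exact htu ⟨j, by rw [hu, ht, hlow]⟩
    · exact hut ⟨j, by rw [hu, ht, hlow]⟩
    · exact hne' (by rw [ht, hu, hlow])

end BitReversal

section CountApprox

variable {P Q : ℤ → Prop} {a b x : ℤ} {E F : ℝ}

lemma countIn_or (h : ∀ t, P t → ¬ Q t) :
    countIn (fun t => P t ∨ Q t) a x = countIn P a x + countIn Q a x := by
  classical
  rw [countIn, countIn, countIn, ← card_union_of_disjoint (disjoint_filter.mpr fun t _ => h t)]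
  congr 1
  ext t
  simp only [mem_union, mem_filter]
  tauto

def CountApprox (P : ℤ → Prop) (a b : ℤ) (E : ℝ) : Prop :=
  ∃ ρ : ℝ, ∀ x ∈ Set.Icc a b, |(countIn P a x : ℝ) - ρ * (x - a)| ≤ E

lemma CountApprox.or (hP : CountApprox P a b E) (hQ : CountApprox Q a b F)
    (h : ∀ t, P t → ¬ Q t) : CountApprox (fun t => P t ∨ Q t) a b (E + F) := by
  obtain ⟨ρ, hρ⟩ := hP
  obtain ⟨σ, hσ⟩ := hQ
  refine ⟨ρ + σ, fun x hx => ?_⟩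
  rw [countIn_or h, Nat.cast_add]
  calc _ = |((countIn P a x : ℝ) - ρ * (x - a)) + ((countIn Q a x : ℝ) - σ * (x - a))| := by
        ring_nf
    _ ≤ E + F := (abs_add_le _ _).trans (add_le_add (hρ x hx) (hσ x hx))

lemma CountApprox.congr (hP : CountApprox P a b E) (h : ∀ t ∈ Ico a b, P t ↔ Q t) :
    CountApprox Q a b E := by
  obtain ⟨ρ, hρ⟩ := hP
  refine ⟨ρ, fun x hx => ?_⟩
  rw [← countIn_congr fun t ht => h t (Ico_subset_Ico_right hx.2 ht)]
  exact hρ x hx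

lemma countApprox_emod {M : ℤ} (hM : 0 < M) (c : ℤ) :
    CountApprox (fun t => t % M = c) a b 1 := by
  by_cases hc : 0 ≤ c ∧ c < M
  · refine ⟨1 / M, fun x hx => ?_⟩
    have hcount : (countIn (fun t => t % M = c) a x : ℤ) =
        ⌈(x - c) / (M : ℚ)⌉ - ⌈(a - c) / (M : ℚ)⌉ := by
      have hmono : ⌈(a - c) / (M : ℚ)⌉ ≤ ⌈(x - c) / (M : ℚ)⌉ :=
        Int.ceil_le_ceil (div_le_div_of_nonneg_right (by exact_mod_cast sub_le_sub_right hx.1 c)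
          (by exact_mod_cast hM.le))
      rw [← max_eq_left (sub_nonneg.mpr hmono), ← Int.Ico_filter_modEq_card a x hM c, countIn]
      congr 3
      ext t
      rw [Int.ModEq, Int.emod_eq_of_lt hc.1 hc.2]
    have h1 := Int.le_ceil ((x - c) / (M : ℚ))
    have h2 := Int.ceil_lt_add_one ((x - c) / (M : ℚ))
    have h3 := Int.le_ceil ((a - c) / (M : ℚ))
    have h4 := Int.ceil_lt_add_one ((a - c) / (M : ℚ))
    have hq : |((countIn (fun t => t % M = c) a x : ℤ) : ℚ) - 1 / M * (x - a)| ≤ 1 := by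
      rw [hcount, abs_le]
      have : (x - c) / (M : ℚ) - (a - c) / M = 1 / M * (x - a) := by ring
      push_cast
      constructor <;> linarith
    exact_mod_cast hq
  · refine ⟨0, fun x _ => ?_⟩
    have hnone : ∀ t, ¬ t % M = c := fun t ht =>
      hc ⟨ht ▸ Int.emod_nonneg t hM.ne', ht ▸ Int.emod_lt_of_pos t hM⟩
    simp [countIn, hnone]

lemma countApprox_of_modEq {M v : ℤ} (hP : ∀ t, P t → t ≡ v [ZMOD M]) (hab : b - a ≤ M) :
    CountApprox P a b 1 := by
  classical
  refine ⟨0, fun x hx => ?_⟩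
  have := hx.2
  have : countIn P a x ≤ 1 := card_le_one.mpr fun t ht u hu => by
    obtain ⟨ht, hPt⟩ := mem_filter.mp ht
    obtain ⟨hu, hPu⟩ := mem_filter.mp hu
    rw [mem_Ico] at ht hu
    have hdvd : M ∣ u - t := ((hP t hPt).trans (hP u hPu).symm).dvd
    have habs : |u - t| < M := abs_lt.mpr ⟨by omega, by omega⟩
    linarith [Int.eq_zero_of_abs_lt_dvd hdvd habs]
  rw [zero_mul, sub_zero, abs_of_nonneg (Nat.cast_nonneg _)]
  exact_mod_cast this

noncomputable def chordParam (a b x : ℤ) : ℝ := ((x : ℝ) - a) / ((b : ℝ) - a)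

lemma chordParam_mem_Icc (hx : x ∈ Set.Icc a b) : chordParam a b x ∈ Set.Icc (0 : ℝ) 1 := by
  have h1 : (a : ℝ) ≤ x := by exact_mod_cast hx.1
  have h2 : (x : ℝ) ≤ b := by exact_mod_cast hx.2
  exact ⟨div_nonneg (by linarith) (by linarith),
    div_le_one_of_le₀ (by linarith) (by linarith)⟩

lemma chordParam_mul (hx : x ∈ Set.Icc a b) : chordParam a b x * ((b : ℝ) - a) = x - a :=
  div_mul_cancel_of_imp fun h => by
    have : (a : ℝ) ≤ x := by exact_mod_cast hx.1
    have : (x : ℝ) ≤ b := by exact_mod_cast hx.2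
    linarith

lemma CountApprox.nonneg (h : CountApprox P a b E) (hab : a ≤ b) : 0 ≤ E := by
  obtain ⟨ρ, hρ⟩ := h
  exact (abs_nonneg _).trans (hρ a ⟨le_rfl, hab⟩)

lemma CountApprox.abs_sub_le (h : CountApprox P a b E) (hx : x ∈ Set.Icc a b) :
    |(countIn P a x : ℝ) - chordParam a b x * countIn P a b| ≤ 2 * E := by
  obtain ⟨ρ, hρ⟩ := h
  obtain ⟨hθ0, hθ1⟩ := chordParam_mem_Icc hx
  have hθ := chordParam_mul hx
  generalize chordParam a b x = θ at hθ0 hθ1 hθ ⊢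
  calc _ = |((countIn P a x : ℝ) - ρ * (x - a)) -
        θ * ((countIn P a b : ℝ) - ρ * (b - a))| := by
        congr 1
        linear_combination -ρ * hθ
    _ ≤ E + θ * E := by
        refine (abs_sub _ _).trans (add_le_add (hρ x hx) ?_)
        rw [abs_mul, abs_of_nonneg hθ0]
        exact mul_le_mul_of_nonneg_left (hρ b ⟨hx.1.trans hx.2, le_rfl⟩) hθ0
    _ ≤ 2 * E := by nlinarith [(abs_nonneg _).trans (hρ a ⟨le_rfl, hx.1.trans hx.2⟩)]

end CountApprox

section BitReversalCount

variable {t₀ t a b : ℤ} {j B : ℕ}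

def upperTail (t₀ : ℤ) (j : ℕ) (t : ℤ) : Prop :=
  (t = t₀ ∨ bitRevLT t₀ t) ∧ t % 2 ^ j = t₀ % 2 ^ j

lemma upperTail_iff : upperTail t₀ j t ↔
    t % 2 ^ (j + 1) = t₀ % 2 ^ (j + 1) + 2 ^ j ∨ upperTail t₀ (j + 1) t := by
  constructor
  · rintro ⟨rfl | ⟨i, hi⟩, hj⟩
    · exact Or.inr ⟨Or.inl rfl, rfl⟩
    · by_cases hj1 : t % 2 ^ (j + 1) = t₀ % 2 ^ (j + 1)
      · exact Or.inr ⟨Or.inr ⟨i, hi⟩, hj1⟩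
      · rcases lt_trichotomy i j with hij | rfl | hij
        · exact absurd hj (emod_two_pow_ne_of_flip hi hij)
        · exact Or.inl hi
        · exact absurd (emod_two_pow_eq_of_flip hi (by omega : j + 1 ≤ i)) hj1
  · rintro (h | ⟨h, hj⟩)
    · exact ⟨Or.inr ⟨j, h⟩, emod_two_pow_eq_of_flip h le_rfl⟩
    · refine ⟨h, ?_⟩
      rw [← emod_two_pow_emod_two_pow t (by omega : j ≤ j + 1), hj, emod_two_pow_emod_two_pow]
      omega

lemma not_upperTail_succ (h : t % 2 ^ (j + 1) = t₀ % 2 ^ (j + 1) + 2 ^ j) :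
    ¬ upperTail t₀ (j + 1) t := fun ⟨_, hj⟩ => by
  have : (0 : ℤ) < 2 ^ j := by positivity
  omega

/-- The `bitRevLT`-upper set of `t₀` is a disjoint union of residue classes modulo
`2, 4, …, 2 ^ B` and of a set with at most one element in any interval of length `2 ^ B`. -/
lemma countApprox_bitRevLT (hab : b - a ≤ 2 ^ B) :
    CountApprox (fun t => t = t₀ ∨ bitRevLT t₀ t) a b (B + 1) := by
  have key : ∀ m ≤ B, CountApprox (upperTail t₀ (B - m)) a b (m + 1) := by
    intro m
    induction m with
    | zero => simpa using countApprox_of_modEq (P := upperTail t₀ B) (fun t ht => ht.2) hab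
    | succ m ih =>
      intro hm
      have hj : B - m = B - (m + 1) + 1 := by omega
      have := (countApprox_emod (a := a) (b := b) (by positivity)
        (t₀ % 2 ^ (B - (m + 1) + 1) + 2 ^ (B - (m + 1)))).or (hj ▸ ih (by omega))
        fun t => not_upperTail_succ
      convert this.congr fun t _ => upperTail_iff.symm using 1
      push_cast
      ring
  refine (key B le_rfl).congr fun t _ => ?_
  simp [upperTail]

lemma countApprox_upAt_bitRevLT {p q : ℤ × ℤ} (h : p ≤ q)
    (hB : q.1 + q.2 - (p.1 + p.2) ≤ 2 ^ B) :
    CountApprox (upAt bitRevLT p q) (p.1 + p.2) (q.1 + q.2) (B + 1) := by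
  rcases (Prod.mk_le_mk.mp h).2.lt_or_eq with hk | hk
  · obtain ⟨t₀, ht₀⟩ := exists_upAt_iff (prec := bitRevLT) h hk
    exact (countApprox_bitRevLT hB).congr fun t ht => (ht₀ t ht).symm
  · refine CountApprox.congr (P := fun _ => False) ⟨0, fun x _ => ?_⟩ fun t ht =>
      iff_false_intro (not_upAt hk ht) |>.symm
    simp [countIn]
    positivity

end BitReversalCount

section Hausdorff

open Metric AffineMap

section NormedSpace

variable {V : Type*} [NormedAddCommGroup V] [NormedSpace ℝ V] {x y : V} {a b : ℤ}

lemma exists_dist_lineMap_le (hab : a ≤ b) (hxy : dist x y ≤ (b : ℝ) - a) {θ : ℝ}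
    (hθ : θ ∈ Set.Icc (0 : ℝ) 1) :
    ∃ s ∈ Set.Icc a b, dist (lineMap x y θ) (lineMap x y (chordParam a b s)) ≤ 1 := by
  have hn : (0 : ℝ) ≤ (b : ℝ) - a := by exact_mod_cast sub_nonneg.mpr hab
  have hfl0 : 0 ≤ ⌊θ * ((b : ℝ) - a)⌋ := Int.floor_nonneg.mpr (mul_nonneg hθ.1 hn)
  have hfl1 : ⌊θ * ((b : ℝ) - a)⌋ ≤ b - a := by
    have := (Int.floor_le (θ * ((b : ℝ) - a))).trans (mul_le_of_le_one_left hn hθ.2)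
    exact_mod_cast this
  have hs : a + ⌊θ * ((b : ℝ) - a)⌋ ∈ Set.Icc a b := ⟨by omega, by omega⟩
  refine ⟨_, hs, ?_⟩
  rw [dist_lineMap_lineMap, Real.dist_eq]
  rcases hn.eq_or_lt with hn0 | hn0
  · simp [le_antisymm (hn0 ▸ hxy) dist_nonneg]
  · refine (mul_le_mul_of_nonneg_left hxy (abs_nonneg _)).trans ?_
    rw [← abs_of_pos hn0, ← abs_mul, abs_of_pos hn0, sub_mul, chordParam_mul hs, Int.cast_add,
      add_sub_cancel_left, abs_le]
    constructor <;> linarith [Int.floor_le (θ * ((b : ℝ) - a)),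
      Int.lt_floor_add_one (θ * ((b : ℝ) - a))]

lemma hausdorffDist_segment_le {f : ℤ → V} {D : ℝ} (hab : a ≤ b) (hD : 0 ≤ D)
    (hxy : dist x y ≤ (b : ℝ) - a)
    (hf : ∀ s ∈ Set.Icc a b, dist (f s) (lineMap x y (chordParam a b s)) ≤ D) :
    hausdorffDist (segment ℝ x y) (f '' Set.Icc a b) ≤ D + 1 := by
  rw [segment_eq_image_lineMap]
  apply hausdorffDist_le_of_mem_dist (by linarith)
  · rintro _ ⟨θ, hθ, rfl⟩
    obtain ⟨s, hs, hdist⟩ := exists_dist_lineMap_le hab hxy hθ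
    have := dist_triangle_right (lineMap x y θ) (f s) (lineMap x y (chordParam a b s))
    exact ⟨f s, Set.mem_image_of_mem f hs, by linarith [hf s hs]⟩
  · rintro _ ⟨s, hs, rfl⟩
    exact ⟨_, Set.mem_image_of_mem _ (chordParam_mem_Icc hs), (hf s hs).trans (by linarith)⟩

end NormedSpace

lemma dist_le_abs_add_abs (x y : EuclideanSpace ℝ (Fin 2)) :
    dist x y ≤ |x 0 - y 0| + |x 1 - y 1| := by
  rw [EuclideanSpace.dist_eq, Fin.sum_univ_two, Real.dist_eq, Real.dist_eq, Real.sqrt_le_iff]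
  refine ⟨by positivity, ?_⟩
  nlinarith [abs_nonneg (x 0 - y 0), abs_nonneg (x 1 - y 1), sq_abs (x 0 - y 0),
    sq_abs (x 1 - y 1)]

lemma toR2_apply_zero (r : ℤ × ℤ) : toR2 r 0 = r.1 := rfl

lemma toR2_apply_one (r : ℤ × ℤ) : toR2 r 1 = r.2 := rfl

/-- A staircase point and the point of the chord at the same level differ by opposite amounts in
the two coordinates. -/
lemma dist_toR2_stairPt_le {P : ℤ → Prop} {p q : ℤ × ℤ} {b s : ℤ}
    (hq : q ∈ stair P p b) (hs : s ∈ Set.Icc (p.1 + p.2) (q.1 + q.2)) :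
    dist (toR2 (stairPt P p s))
        (lineMap (toR2 p) (toR2 q) (chordParam (p.1 + p.2) (q.1 + q.2) s)) ≤
      2 * |(countIn P (p.1 + p.2) s : ℝ) -
        chordParam (p.1 + p.2) (q.1 + q.2) s * countIn P (p.1 + p.2) (q.1 + q.2)| := by
  have hθ := chordParam_mul hs
  generalize chordParam (p.1 + p.2) (q.1 + q.2) s = θ at hθ ⊢
  have hq2 : (q.2 : ℝ) = p.2 + countIn P (p.1 + p.2) (q.1 + q.2) := by exact_mod_cast hq.2.2
  refine (dist_le_abs_add_abs _ _).trans_eq ?_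
  simp only [stairPt, lineMap_apply_module, toR2_apply_zero, toR2_apply_one, PiLp.add_apply,
    PiLp.smul_apply, smul_eq_mul]
  push_cast at hθ ⊢
  set N : ℝ := (countIn P (p.1 + p.2) s : ℝ)
  set K : ℝ := (countIn P (p.1 + p.2) (q.1 + q.2) : ℝ)
  have hx : (s : ℝ) - p.2 - N - ((1 - θ) * p.1 + θ * q.1) = -(N - θ * K) := by
    linear_combination -hθ + θ * hq2
  have hy : (p.2 : ℝ) + N - ((1 - θ) * p.2 + θ * q.2) = N - θ * K := by
    linear_combination -θ * hq2
  rw [hx, hy, abs_neg, two_mul]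

lemma hausdorffDist_segment_digSegNE_le {prec : ℤ → ℤ → Prop} [IsStrictTotalOrder ℤ prec]
    {p q : ℤ × ℤ} {E : ℝ} (h : p ≤ q)
    (hE : CountApprox (upAt prec p q) (p.1 + p.2) (q.1 + q.2) E) :
    hausdorffDist (segment ℝ (toR2 p) (toR2 q)) (toR2 '' digSegNE prec p q) ≤ 4 * E + 1 := by
  obtain ⟨h1, h2⟩ := Prod.mk_le_mk.mp h
  have hab : p.1 + p.2 ≤ q.1 + q.2 := by omega
  have hpq : dist (toR2 p) (toR2 q) ≤ ((q.1 + q.2 : ℤ) : ℝ) - (p.1 + p.2 : ℤ) := by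
    have e1 : (0 : ℝ) ≤ q.1 - p.1 := by exact_mod_cast sub_nonneg.mpr h1
    have e2 : (0 : ℝ) ≤ q.2 - p.2 := by exact_mod_cast sub_nonneg.mpr h2
    refine (dist_le_abs_add_abs _ _).trans_eq ?_
    rw [toR2_apply_zero, toR2_apply_zero, toR2_apply_one, toR2_apply_one, abs_sub_comm,
      abs_of_nonneg e1, abs_sub_comm, abs_of_nonneg e2]
    push_cast
    ring
  rw [digSegNE_eq_stair, stair_eq_image, Set.image_image]
  refine hausdorffDist_segment_le hab (by linarith [hE.nonneg hab]) hpq fun s hs => ?_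
  exact (dist_toR2_stairPt_le (mem_digSegNE_right h) hs).trans (by linarith [hE.abs_sub_le hs])

end Hausdorff

section Reflection

noncomputable def mirrorR2 : EuclideanSpace ℝ (Fin 2) ≃ₗᵢ[ℝ] EuclideanSpace ℝ (Fin 2) :=
  LinearIsometryEquiv.piLpCongrRight 2 fun i =>
    if i = 0 then LinearIsometryEquiv.neg ℝ else LinearIsometryEquiv.refl ℝ ℝ

lemma toR2_mirror (r : ℤ × ℤ) : toR2 (mirror r) = mirrorR2 (toR2 r) := by
  ext i
  fin_cases i <;> simp [mirrorR2, toR2, mirror, LinearIsometryEquiv.piLpCongrRight_apply]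

variable {σ : ℤ × ℤ → ℤ × ℤ}

lemma IsOrientation.exists_linearIsometryEquiv (hσ : IsOrientation σ) :
    ∃ Φ : EuclideanSpace ℝ (Fin 2) ≃ₗᵢ[ℝ] EuclideanSpace ℝ (Fin 2),
      ∀ r, toR2 (σ r) = Φ (toR2 r) := by
  rcases hσ with rfl | rfl
  exacts [⟨LinearIsometryEquiv.refl ℝ _, fun _ => rfl⟩, ⟨mirrorR2, toR2_mirror⟩]

open Metric in
lemma hausdorffDist_digSeg_le {prec : ℤ → ℤ → Prop} [IsStrictTotalOrder ℤ prec]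
    (F : ℝ → ℝ)
    (hF : ∀ p q : ℤ × ℤ, p ≤ q → hausdorffDist (segment ℝ (toR2 p) (toR2 q))
      (toR2 '' digSegNE prec p q) ≤ F (dist (toR2 p) (toR2 q))) (p q : ℤ × ℤ) :
    hausdorffDist (segment ℝ (toR2 p) (toR2 q)) (toR2 '' digSeg prec p q) ≤
      F (dist (toR2 p) (toR2 q)) := by
  obtain ⟨σ, u, v, hσ, huv, h, heq⟩ := exists_digSeg_eq_image prec p q
  obtain ⟨Φ, hΦ⟩ := hσ.exists_linearIsometryEquiv
  have hback : ∀ r, toR2 r = Φ (toR2 (σ r)) := fun r => by rw [← hΦ, hσ.involutive]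
  have key : hausdorffDist (segment ℝ (toR2 u) (toR2 v)) (toR2 '' digSeg prec p q) ≤
      F (dist (toR2 u) (toR2 v)) := by
    have hseg : segment ℝ (toR2 u) (toR2 v) = Φ '' segment ℝ (toR2 (σ u)) (toR2 (σ v)) := by
      rw [hback u, hback v]
      simpa using (image_segment ℝ Φ.toLinearIsometry.toLinearMap.toAffineMap
        (toR2 (σ u)) (toR2 (σ v))).symm
    rw [heq, Set.image_image, show (fun r => toR2 (σ r)) = Φ ∘ toR2 from funext hΦ,
      Set.image_comp, hseg, hausdorffDist_image Φ.isometry, hback u, hback v, Φ.dist_map]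
    exact hF _ _ h
  rcases Sym2.eq_iff.mp huv with ⟨rfl, rfl⟩ | ⟨rfl, rfl⟩
  · exact key
  · rwa [segment_symm, dist_comm]

end Reflection

section LogBound

open Real

/-- `4 * Nat.log 2 m + 9 = 4 (B + 1) + 1` for `B = Nat.log 2 m + 1` is the Hausdorff bound for a
segment with `m ≤ 2 d` steps and length `d`. -/
lemma four_mul_natLog_add_nine_le {m : ℕ} {d : ℝ} (hd : 0 ≤ d) (hm : (m : ℝ) ≤ 2 * d) :
    4 * (Nat.log 2 m : ℝ) + 9 ≤ 25 * log (d + 2) := by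
  have hl2 := log_two_gt_d9
  have hL : log 2 ≤ log (d + 2) := log_le_log (by norm_num) (by linarith)
  have hlogm : (Nat.log 2 m : ℝ) * log 2 ≤ 2 * log (d + 2) := by
    have h1 := natLog_le_logb m 2
    rw [Nat.cast_ofNat, logb, le_div_iff₀ (by positivity)] at h1
    refine h1.trans ?_
    rcases (Nat.cast_nonneg m : (0 : ℝ) ≤ m).eq_or_lt with hm0 | hm0
    · rw [← hm0, log_zero]
      linarith [log_nonneg (by linarith : (1 : ℝ) ≤ d + 2)]
    · calc log m ≤ log ((d + 2) ^ 2) := log_le_log hm0 (by nlinarith)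
        _ = 2 * log (d + 2) := by rw [log_pow]; norm_cast
  have h1 : (4 * (Nat.log 2 m : ℝ) + 9) * log 2 ≤ 17 * log (d + 2) := by nlinarith
  have h2 : 17 * log (d + 2) ≤ 25 * log (d + 2) * log 2 := by nlinarith
  exact le_of_mul_le_mul_right (h1.trans h2) (by linarith)

end LogBound

open Metric Real in
lemma hausdorffDist_segment_digSegNE_bitRevLT_le {p q : ℤ × ℤ} (h : p ≤ q) :
    hausdorffDist (segment ℝ (toR2 p) (toR2 q)) (toR2 '' digSegNE bitRevLT p q) ≤
      25 * log (dist (toR2 p) (toR2 q) + 2) := by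
  obtain ⟨h1, h2⟩ := Prod.mk_le_mk.mp h
  set m := (q.1 + q.2 - (p.1 + p.2)).toNat
  have hB : q.1 + q.2 - (p.1 + p.2) ≤ 2 ^ (Nat.log 2 m + 1) := by
    have := Nat.lt_pow_succ_log_self (by norm_num : 1 < 2) m
    have : (m : ℤ) < 2 ^ (Nat.log 2 m + 1) := by exact_mod_cast this
    omega
  have hH := hausdorffDist_segment_digSegNE_le h (countApprox_upAt_bitRevLT h hB)
  have hm : (m : ℝ) ≤ 2 * dist (toR2 p) (toR2 q) := by
    have d1 := PiLp.dist_apply_le (toR2 q) (toR2 p) 0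
    have d2 := PiLp.dist_apply_le (toR2 q) (toR2 p) 1
    rw [Real.dist_eq, dist_comm] at d1 d2
    change |(q.1 : ℝ) - p.1| ≤ _ at d1
    change |(q.2 : ℝ) - p.2| ≤ _ at d2
    have : (m : ℝ) = ((q.1 : ℝ) - p.1) + ((q.2 : ℝ) - p.2) := by
      rw [show (m : ℝ) = ((m : ℤ) : ℝ) from rfl, Int.toNat_of_nonneg (by omega)]
      push_cast
      ring
    rw [this]
    exact le_trans (by gcongr <;> exact le_abs_self _) (by linarith : |_| + |_| ≤ _)
  push_cast at hH
  linarith [four_mul_natLog_add_nine_le dist_nonneg hm]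

theorem exists_CDS_small_hausdorff :
    ∃ (S : ℤ × ℤ → ℤ × ℤ → Set (ℤ × ℤ)) (c : ℝ), 0 < c ∧ IsCDS S ∧
      ∀ p q : ℤ × ℤ,
        Metric.hausdorffDist (segment ℝ (toR2 p) (toR2 q)) (toR2 '' S p q) ≤
          c * Real.log (dist (toR2 p) (toR2 q) + 2) :=
  ⟨digSeg bitRevLT, 25, by norm_num, isCDS_digSeg bitRevLT,
    hausdorffDist_digSeg_le (fun d => 25 * Real.log (d + 2)) fun _ _ =>
      hausdorffDist_segment_digSegNE_bitRevLT_le⟩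
end

section
/- Fix d ≥ 2 and a strict total order ≺ on ℤ, and let S_≺ be the d-dimensional construction defined on pairs p,q ∈ ℤ^d with p_i ≤ q_i for all i. Then this construction satisfies: (S1) S_≺(p,q) is the vertex set of a path from p to q in the grid graph on ℤ^d; (S3) for every r ∈ S_≺(p,q) (note that automatically p_i ≤ r_i ≤ q_i for all i), S_≺(p,r) ⊆ S_≺(p,q); (S4) there exists r ∈ ℤ^d with r_i ≥ q_i for all i, r ∉ S_≺(p,q), and S_≺(p,q) ⊆ S_≺(p,r); and (S5) if p_i = q_i for some coordinate i, then every point of S_≺(p,q) has i-th coordinate equal to p_i. -/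
/- The rank "from the top" (w.r.t. `prec`) of `s` within the interval `[A, B-1]`:
the number of elements of the interval that are greater than or equal to `s`. -/
open Classical in
noncomputable def rankFromTop (prec : ℤ → ℤ → Prop) (A B s : ℤ) : ℤ :=
  (((Finset.Ico A B).filter (fun u => u = s ∨ prec s u)).card : ℤ)

/- In the `d`-dimensional construction, at a point of coordinate sum `s`, the path
moves in direction `j`: the directions are ordered `d-1, d-2, …, 0` (checked from the
top index down), and the levels of the segment interval of the `q_j - p_j` next-greatest
ranks (after those reserved for higher directions) are the ones where we step in
direction `j`. -/
open Classical in
noncomputable def dirAt {d : ℕ} (prec : ℤ → ℤ → Prop) (p q : Fin d → ℤ) (s : ℤ)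
    (j : Fin d) : Prop :=
  (∑ l ∈ Finset.univ.filter (fun l => j < l), (q l - p l)) <
      rankFromTop prec (∑ i, p i) (∑ i, q i) s ∧
    rankFromTop prec (∑ i, p i) (∑ i, q i) s ≤
      (∑ l ∈ Finset.univ.filter (fun l => j ≤ l), (q l - p l))

/- The `d`-dimensional digital segment derived from `prec`, defined for `p` and `q`
with `p i ≤ q i` for all `i`. -/
open Classical in
noncomputable def digSegD {d : ℕ} (prec : ℤ → ℤ → Prop) (p q : Fin d → ℤ) :
    Set (Fin d → ℤ) :=
  { r | (∑ i, p i) ≤ (∑ i, r i) ∧ (∑ i, r i) ≤ (∑ i, q i) ∧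
    ∀ j : Fin d, r j = p j +
      (((Finset.Ico (∑ i, p i) (∑ i, r i)).filter (fun s => dirAt prec p q s j)).card : ℤ) }

/- Adjacency in the grid graph on `ℤ^d`. -/
def GridAdjD {d : ℕ} (p q : Fin d → ℤ) : Prop :=
  ∃ j : Fin d, |q j - p j| = 1 ∧ ∀ l : Fin d, l ≠ j → q l = p l

/- `S` is the vertex set of a path from `p` to `q` in the grid graph on `ℤ^d`. -/
def IsGridPathD {d : ℕ} (p q : Fin d → ℤ) (S : Set (Fin d → ℤ)) : Prop :=
  ∃ n : ℕ, ∃ f : Fin (n + 1) → (Fin d → ℤ), f 0 = p ∧ f (Fin.last n) = q ∧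
    Function.Injective f ∧ (∀ i : Fin n, GridAdjD (f i.castSucc) (f i.succ)) ∧
    Set.range f = S

/-!
Level `t ∈ [∑ p, ∑ q)` of the segment steps in the unique direction `j` whose band
`(tailSum p q (j + 1), tailSum p q j]` contains the `prec`-rank of `t` in `[∑ p, ∑ q)`. The ranks
biject onto `[1, ∑ q - ∑ p]` and the band of `j` has `q j - p j` elements, so the points
`segPoint prec p q t` form a grid path from `p` to `q` (S1), never moving in a direction with
`p i = q i` (S5). For `r` on the segment, ranking the levels of `[∑ p, ∑ r)` instead of
`[∑ p, ∑ q)` transforms ranks and band boundaries alike by one monotone counting map, which keeps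
every level in its band, so the segment from `p` to `r` is an initial piece of the one to `q` (S3).
For (S4), choose `j` such that the segment from `p` to `q + eⱼ` ends with a step in direction `j`:
it then passes through `q`, and (S3) applies.
-/

open Finset
open scoped Classical

lemma sum_card_filter_eq_card_filter_exists {α β : Type*} [DecidableEq α] (s : Finset α)
    (t : Finset β) (P : α → β → Prop) [∀ b, DecidablePred (P · b)]
    [DecidablePred fun x => ∃ b ∈ t, P x b]
    (h : ∀ x ∈ s, ∀ b ∈ t, ∀ b' ∈ t, P x b → P x b' → b = b') :
    ∑ b ∈ t, #{x ∈ s | P x b} = #{x ∈ s | ∃ b ∈ t, P x b} := by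
  rw [← card_biUnion fun b hb b' hb' hne =>
    disjoint_filter.mpr fun x hx hPb hPb' => hne (h x hx b hb b' hb' hPb hPb')]
  congr 1
  ext x
  simp only [mem_biUnion, mem_filter]
  tauto

lemma card_filter_apply_le_mono {α β : Type*} [LinearOrder β] (S : Finset α) (f : α → β) :
    Monotone fun x => #{u ∈ S | f u ≤ x} := fun _ _ hxy =>
  card_le_card (monotone_filter_right _ fun _ _ hu => hu.trans hxy)

lemma card_filter_apply_le_lt {α β : Type*} [LinearOrder β] {S : Finset α} (f : α → β) {s : α}
    {x : β} (hs : s ∈ S) (hx : x < f s) : #{u ∈ S | f u ≤ x} < #{u ∈ S | f u ≤ f s} :=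
  card_lt_card <| (ssubset_iff_of_subset (monotone_filter_right _ fun _ _ hu => hu.trans hx.le)).mpr
    ⟨s, mem_filter.mpr ⟨hs, le_rfl⟩, fun h => (mem_filter.mp h).2.not_gt hx⟩

section Rank

variable {prec : ℤ → ℤ → Prop} {A B T s u : ℤ}

lemma rankFromTop_pos (hs : s ∈ Ico A B) : 0 < rankFromTop prec A B s := by
  unfold rankFromTop
  exact_mod_cast card_pos.mpr ⟨s, mem_filter.mpr ⟨hs, Or.inl rfl⟩⟩

lemma rankFromTop_le (hs : s ∈ Ico A B) : rankFromTop prec A B s ≤ B - A := by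
  have hcard := card_filter_le (Ico A B) fun u => u = s ∨ prec s u
  rw [Int.card_Ico] at hcard
  have := mem_Ico.mp hs
  unfold rankFromTop
  omega

variable [IsStrictTotalOrder ℤ prec]

lemma rankFromTop_lt_rankFromTop (hs : s ∈ Ico A B) (h : prec s u) :
    rankFromTop prec A B u < rankFromTop prec A B s := by
  have hsub : {v ∈ Ico A B | v = u ∨ prec u v} ⊆ {v ∈ Ico A B | v = s ∨ prec s v} :=
    monotone_filter_right _ fun v _ hv =>
      Or.inr (hv.elim (fun e => by rwa [e]) fun h' => _root_.trans h h')
  have hs' : s ∉ {v ∈ Ico A B | v = u ∨ prec u v} := by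
    simp only [mem_filter, not_and, not_or]
    exact fun _ => ⟨fun e => irrefl u (e ▸ h), asymm h⟩
  unfold rankFromTop
  exact_mod_cast card_lt_card ((ssubset_iff_of_subset hsub).mpr ⟨s, by simp [hs], hs'⟩)

lemma rankFromTop_le_rankFromTop_iff (hs : s ∈ Ico A B) (hu : u ∈ Ico A B) :
    rankFromTop prec A B u ≤ rankFromTop prec A B s ↔ u = s ∨ prec s u := by
  refine ⟨fun h => ?_, ?_⟩
  · rcases trichotomous_of prec s u with h' | rfl | h'
    · exact Or.inr h'
    · exact Or.inl rfl
    · exact absurd h (not_le.mpr (rankFromTop_lt_rankFromTop hu h'))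
  · rintro (rfl | h)
    · exact le_rfl
    · exact (rankFromTop_lt_rankFromTop hs h).le

lemma rankFromTop_injOn : Set.InjOn (rankFromTop prec A B) (Ico A B) := by
  intro u hu s hs h
  rcases (rankFromTop_le_rankFromTop_iff hs hu).mp h.le with rfl | h₁
  · rfl
  rcases (rankFromTop_le_rankFromTop_iff hu hs).mp h.ge with rfl | h₂
  · rfl
  exact absurd h₂ (asymm h₁)

lemma image_rankFromTop : (Ico A B).image (rankFromTop prec A B) = Icc 1 (B - A) := by
  refine eq_of_subset_of_card_le (fun x hx => ?_) ?_
  · obtain ⟨s, hs, rfl⟩ := mem_image.mp hx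
    exact mem_Icc.mpr ⟨rankFromTop_pos hs, rankFromTop_le hs⟩
  · rw [card_image_of_injOn rankFromTop_injOn, Int.card_Icc, Int.card_Ico]
    omega

lemma card_filter_rankFromTop_mem_Ioc {a b : ℤ} (ha : 0 ≤ a) (hab : a ≤ b) (hb : b ≤ B - A) :
    (#{s ∈ Ico A B | a < rankFromTop prec A B s ∧ rankFromTop prec A B s ≤ b} : ℤ) = b - a := by
  rw [← card_image_of_injOn ((rankFromTop_injOn (prec := prec)).mono (filter_subset _ _)),
    ← filter_image (p := fun x => a < x ∧ x ≤ b),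
    image_rankFromTop]
  have : {x ∈ Icc 1 (B - A) | a < x ∧ x ≤ b} = Ioc a b := by
    ext x
    simp only [mem_filter, mem_Icc, mem_Ioc]
    omega
  rw [this, Int.card_Ioc]
  omega

lemma rankFromTop_of_le (hT : T ≤ B) (hs : s ∈ Ico A T) :
    rankFromTop prec A T s =
      #{u ∈ Ico A T | rankFromTop prec A B u ≤ rankFromTop prec A B s} := by
  have hsub : Ico A T ⊆ Ico A B := Ico_subset_Ico_right hT
  unfold rankFromTop
  congr 2
  exact filter_congr fun u hu => (rankFromTop_le_rankFromTop_iff (hsub hs) (hsub hu)).symm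

end Rank

section TailSum

variable {d : ℕ} {p q : Fin d → ℤ}

def tailSum (p q : Fin d → ℤ) (m : ℕ) : ℤ :=
  ∑ l : Fin d with m ≤ l.val, (q l - p l)

lemma tailSum_zero : tailSum p q 0 = ∑ i, q i - ∑ i, p i := by
  simp [tailSum, sum_sub_distrib]

lemma tailSum_of_le {m : ℕ} (hm : d ≤ m) : tailSum p q m = 0 := by
  refine sum_eq_zero fun l hl => absurd (mem_filter.mp hl).2 ?_
  have := l.isLt
  omega

lemma tailSum_eq_add (j : Fin d) : tailSum p q j = tailSum p q (j + 1) + (q j - p j) := by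
  have : univ.filter (fun l : Fin d => j.val ≤ l.val) =
      insert j (univ.filter fun l : Fin d => j.val + 1 ≤ l.val) := by
    ext l
    simp only [mem_filter, mem_univ, true_and, mem_insert, Fin.ext_iff]
    omega
  rw [tailSum, this, sum_insert (by simp), add_comm]
  rfl

lemma tailSum_antitone (hpq : p ≤ q) : Antitone (tailSum p q) := fun _ _ h =>
  sum_le_sum_of_subset_of_nonneg (monotone_filter_right _ fun _ _ hl => h.trans hl)
    fun l _ _ => sub_nonneg.mpr (hpq l)

lemma tailSum_nonneg (hpq : p ≤ q) (m : ℕ) : 0 ≤ tailSum p q m :=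
  sum_nonneg fun l _ => sub_nonneg.mpr (hpq l)

lemma exists_tailSum_lt_le {v : ℤ} (hv : 0 < v) (hv' : v ≤ tailSum p q 0) :
    ∃ j : Fin d, tailSum p q (j + 1) < v ∧ v ≤ tailSum p q j := by
  obtain ⟨m, hm, hm'⟩ := Nat.exists_not_and_succ_of_not_zero_of_exists (p := (tailSum p q · < v))
    (by simpa using hv') ⟨d, by rwa [tailSum_of_le le_rfl]⟩
  have hmd : m < d := by
    by_contra! h
    exact hm (by rwa [tailSum_of_le h])
  exact ⟨⟨m, hmd⟩, hm', not_lt.mp hm⟩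

lemma exists_tailSum_lt_le_add_one (hd : 0 < d) (hpq : p ≤ q) {v : ℤ} (hv : 0 < v)
    (hv' : v ≤ tailSum p q 0 + 1) :
    ∃ j : Fin d, tailSum p q (j + 1) < v ∧ v ≤ tailSum p q j + 1 := by
  by_cases h : v ≤ tailSum p q 0
  · obtain ⟨j, hj⟩ := exists_tailSum_lt_le hv h
    exact ⟨j, hj.1, by omega⟩
  · have := tailSum_antitone hpq (Nat.zero_le 1)
    exact ⟨⟨0, hd⟩, by simpa using this.trans_lt (not_le.mp h), by simpa using hv'⟩

end TailSum

section Direction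

variable {d : ℕ} {prec : ℤ → ℤ → Prop} {p q : Fin d → ℤ} {s T : ℤ}

lemma dirAt_iff (j : Fin d) : dirAt prec p q s j ↔
    tailSum p q (j + 1) < rankFromTop prec (∑ i, p i) (∑ i, q i) s ∧
      rankFromTop prec (∑ i, p i) (∑ i, q i) s ≤ tailSum p q j := by
  simp only [dirAt, tailSum, Fin.lt_def, Fin.le_def, Nat.add_one_le_iff]

lemma not_dirAt_of_eq {j : Fin d} (hj : p j = q j) : ¬ dirAt prec p q s j := by
  rw [dirAt_iff, tailSum_eq_add j, hj, sub_self, add_zero]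
  exact fun h => (h.1.trans_le h.2).false

lemma exists_dirAt (hs : s ∈ Ico (∑ i, p i) (∑ i, q i)) : ∃ j, dirAt prec p q s j :=
  let ⟨j, hj⟩ := exists_tailSum_lt_le (rankFromTop_pos hs) (tailSum_zero ▸ rankFromTop_le hs)
  ⟨j, (dirAt_iff j).mpr hj⟩

lemma dirAt_unique (hpq : p ≤ q) {j j' : Fin d} (h : dirAt prec p q s j)
    (h' : dirAt prec p q s j') : j = j' := by
  rw [dirAt_iff] at h h'
  rcases lt_trichotomy j j' with hlt | rfl | hlt
  · have := tailSum_antitone hpq (Nat.add_one_le_of_lt hlt)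
    omega
  · rfl
  · have := tailSum_antitone hpq (Nat.add_one_le_of_lt hlt)
    omega

lemma sum_card_filter_dirAt (hpq : p ≤ q) (hT : T ≤ ∑ i, q i) (m : ℕ) :
    ∑ l : Fin d with m ≤ l.val, #{s ∈ Ico (∑ i, p i) T | dirAt prec p q s l} =
      #{s ∈ Ico (∑ i, p i) T | rankFromTop prec (∑ i, p i) (∑ i, q i) s ≤ tailSum p q m} := by
  refine (sum_card_filter_eq_card_filter_exists _ _ (fun s l => dirAt prec p q s l)
    fun s _ l _ l' _ h h' => dirAt_unique hpq h h').trans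
      (congrArg card (filter_congr fun s hs => ⟨?_, fun hle => ?_⟩))
  · rintro ⟨l, hl, hdir⟩
    exact ((dirAt_iff l).mp hdir).2.trans (tailSum_antitone hpq (mem_filter.mp hl).2)
  · obtain ⟨l, hdir⟩ := exists_dirAt (Ico_subset_Ico_right hT hs)
    refine ⟨l, mem_filter.mpr ⟨mem_univ l, ?_⟩, hdir⟩
    by_contra! hlt
    have := tailSum_antitone hpq (Nat.add_one_le_of_lt hlt)
    have := (dirAt_iff l).mp hdir
    omega

variable [IsStrictTotalOrder ℤ prec]

lemma card_filter_dirAt (hpq : p ≤ q) (j : Fin d) :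
    (#{s ∈ Ico (∑ i, p i) (∑ i, q i) | dirAt prec p q s j} : ℤ) = q j - p j := by
  have hj := tailSum_eq_add (p := p) (q := q) j
  have hle := tailSum_antitone hpq (Nat.zero_le j)
  have : p j ≤ q j := hpq j
  rw [filter_congr fun s _ => dirAt_iff j, card_filter_rankFromTop_mem_Ioc
    (tailSum_nonneg hpq _) (by omega) (by rwa [← tailSum_zero])]
  omega

end Direction

section SegPoint

variable {d : ℕ} {prec : ℤ → ℤ → Prop} {p q r : Fin d → ℤ} {t : ℤ}

noncomputable def segPoint (prec : ℤ → ℤ → Prop) (p q : Fin d → ℤ) (t : ℤ) : Fin d → ℤ :=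
  fun j => p j + #{s ∈ Ico (∑ i, p i) t | dirAt prec p q s j}

lemma mem_digSegD_iff : r ∈ digSegD prec p q ↔
    ∑ i, p i ≤ ∑ i, r i ∧ ∑ i, r i ≤ ∑ i, q i ∧ r = segPoint prec p q (∑ i, r i) := by
  rw [funext_iff]
  rfl

lemma segPoint_sum_left : segPoint prec p q (∑ i, p i) = p := by
  ext j
  simp [segPoint]

lemma segPoint_add_one (ht : ∑ i, p i ≤ t) (j : Fin d) :
    segPoint prec p q (t + 1) j = segPoint prec p q t j + if dirAt prec p q t j then 1 else 0 := by
  rw [segPoint, segPoint, ← insert_Ico_right_eq_Ico_add_one ht, filter_insert]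
  split_ifs
  · rw [card_insert_of_notMem (by simp)]
    push_cast
    ring
  · simp

lemma le_of_mem_digSegD (hr : r ∈ digSegD prec p q) : p ≤ r := fun j => by
  rw [hr.2.2 j]
  exact le_add_of_nonneg_right (Nat.cast_nonneg _)

lemma digSegD_apply_of_eq {i : Fin d} (hi : p i = q i) (hr : r ∈ digSegD prec p q) :
    r i = p i := by
  rw [hr.2.2 i, filter_false_of_mem fun s _ => not_dirAt_of_eq hi]
  simp

lemma sum_segPoint (hpq : p ≤ q) (ht₁ : ∑ i, p i ≤ t) (ht₂ : t ≤ ∑ i, q i) :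
    ∑ j, segPoint prec p q t j = t := by
  have h := sum_card_filter_dirAt (prec := prec) hpq ht₂ 0
  simp only [Nat.zero_le, filter_true] at h
  have hle : ∀ s ∈ Ico (∑ i, p i) t,
      rankFromTop prec (∑ i, p i) (∑ i, q i) s ≤ tailSum p q 0 := by
    intro s hs
    rw [tailSum_zero]
    exact rankFromTop_le (Ico_subset_Ico_right ht₂ hs)
  rw [filter_true_of_mem hle, Int.card_Ico] at h
  simp only [segPoint, sum_add_distrib, ← Nat.cast_sum, h]
  omega

lemma segPoint_mem_digSegD (hpq : p ≤ q) (ht₁ : ∑ i, p i ≤ t) (ht₂ : t ≤ ∑ i, q i) :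
    segPoint prec p q t ∈ digSegD prec p q := by
  refine mem_digSegD_iff.mpr ?_
  rw [sum_segPoint hpq ht₁ ht₂]
  exact ⟨ht₁, ht₂, rfl⟩

lemma gridAdjD_segPoint (hpq : p ≤ q) (ht₁ : ∑ i, p i ≤ t) (ht₂ : t < ∑ i, q i) :
    GridAdjD (segPoint prec p q t) (segPoint prec p q (t + 1)) := by
  obtain ⟨j, hj⟩ := exists_dirAt (prec := prec) (mem_Ico.mpr ⟨ht₁, ht₂⟩)
  refine ⟨j, by simp [segPoint_add_one ht₁, hj], fun l hl => ?_⟩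
  have : ¬ dirAt prec p q t l := fun h => hl (dirAt_unique hpq h hj)
  simp [segPoint_add_one ht₁, this]

variable [IsStrictTotalOrder ℤ prec]

lemma segPoint_sum_right (hpq : p ≤ q) : segPoint prec p q (∑ i, q i) = q := by
  ext j
  simp [segPoint, card_filter_dirAt hpq]

theorem isGridPathD_digSegD (hpq : p ≤ q) : IsGridPathD p q (digSegD prec p q) := by
  set A := ∑ i, p i
  set B := ∑ i, q i
  have hAB : A ≤ B := sum_le_sum fun i _ => hpq i
  refine ⟨(B - A).toNat, fun i => segPoint prec p q (A + i), ?_, ?_, ?_, ?_, ?_⟩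
  · simp [A, segPoint_sum_left]
  · simp only [Fin.val_last]
    rw [show A + (B - A).toNat = B by omega, segPoint_sum_right hpq]
  · intro i i' h
    have h' := congrArg (fun r => ∑ j, r j) h
    simp only at h'
    rw [sum_segPoint hpq (by omega) (by omega), sum_segPoint hpq (by omega) (by omega)] at h'
    exact Fin.ext (by omega)
  · intro i
    simpa [add_assoc] using gridAdjD_segPoint hpq (t := A + i) (by omega) (by omega)
  · ext r
    constructor
    · rintro ⟨i, rfl⟩
      exact segPoint_mem_digSegD hpq (by omega) (by omega)
    · intro hr
      obtain ⟨h₁, h₂, h₃⟩ := mem_digSegD_iff.mp hr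
      refine ⟨⟨(∑ i, r i - A).toNat, by omega⟩, ?_⟩
      simp only
      rw [show A + ((∑ i, r i - A).toNat : ℤ) = ∑ i, r i by omega, ← h₃]

end SegPoint

section Subsegment

variable {d : ℕ} {prec : ℤ → ℤ → Prop} {p q r : Fin d → ℤ} {s t : ℤ}

lemma tailSum_of_mem_digSegD (hpq : p ≤ q) (hr : r ∈ digSegD prec p q) (m : ℕ) :
    tailSum p r m = #{u ∈ Ico (∑ i, p i) (∑ i, r i) |
      rankFromTop prec (∑ i, p i) (∑ i, q i) u ≤ tailSum p q m} := by
  rw [← sum_card_filter_dirAt hpq hr.2.1 m, Nat.cast_sum, tailSum]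
  refine sum_congr rfl fun l _ => ?_
  rw [hr.2.2 l, add_sub_cancel_left]

variable [IsStrictTotalOrder ℤ prec]

/-- Ranks in `[∑ p, ∑ r)` and the `tailSum`s of `(p, r)` are the images of ranks in `[∑ p, ∑ q)`
and the `tailSum`s of `(p, q)` under `x ↦ #{u ∈ [∑ p, ∑ r) | rank u ≤ x}`, which is monotone and
strictly increasing at the rank of every level below `∑ r`. -/
lemma dirAt_of_mem_digSegD (hpq : p ≤ q) (hr : r ∈ digSegD prec p q)
    (hs : s ∈ Ico (∑ i, p i) (∑ i, r i)) {j : Fin d} (h : dirAt prec p q s j) :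
    dirAt prec p r s j := by
  rw [dirAt_iff] at h ⊢
  rw [rankFromTop_of_le hr.2.1 hs, tailSum_of_mem_digSegD hpq hr,
    tailSum_of_mem_digSegD hpq hr]
  exact ⟨mod_cast card_filter_apply_le_lt _ hs h.1,
    mod_cast card_filter_apply_le_mono _ (rankFromTop prec (∑ i, p i) (∑ i, q i)) h.2⟩

lemma dirAt_iff_of_mem_digSegD (hpq : p ≤ q) (hr : r ∈ digSegD prec p q)
    (hs : s ∈ Ico (∑ i, p i) (∑ i, r i)) (j : Fin d) :
    dirAt prec p r s j ↔ dirAt prec p q s j := by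
  refine ⟨fun h => ?_, dirAt_of_mem_digSegD hpq hr hs⟩
  obtain ⟨j', hj'⟩ := exists_dirAt (prec := prec) (Ico_subset_Ico_right hr.2.1 hs)
  rwa [dirAt_unique (le_of_mem_digSegD hr) h (dirAt_of_mem_digSegD hpq hr hs hj')]

lemma segPoint_of_mem_digSegD (hpq : p ≤ q) (hr : r ∈ digSegD prec p q) (ht : t ≤ ∑ i, r i) :
    segPoint prec p r t = segPoint prec p q t := by
  ext j
  rw [segPoint, segPoint, filter_congr fun s hs =>
    dirAt_iff_of_mem_digSegD hpq hr (Ico_subset_Ico_right ht hs) j]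

theorem digSegD_subset_of_mem (hpq : p ≤ q) (hr : r ∈ digSegD prec p q) :
    digSegD prec p r ⊆ digSegD prec p q := by
  intro r' hr'
  obtain ⟨h₁, h₂, h₃⟩ := mem_digSegD_iff.mp hr'
  exact mem_digSegD_iff.mpr ⟨h₁, h₂.trans hr.2.1, h₃.trans (segPoint_of_mem_digSegD hpq hr h₂)⟩

end Subsegment

section Prolongation

variable {d : ℕ} {prec : ℤ → ℤ → Prop} [IsStrictTotalOrder ℤ prec] {p q : Fin d → ℤ}

lemma le_add_single (j : Fin d) : q ≤ q + Pi.single j 1 :=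
  le_add_of_nonneg_right (Pi.single_nonneg.mpr zero_le_one)

lemma sum_add_single (j : Fin d) : ∑ i, (q + Pi.single j 1 : Fin d → ℤ) i = ∑ i, q i + 1 := by
  simp [sum_add_distrib]

lemma tailSum_add_single (j : Fin d) (m : ℕ) :
    tailSum p (q + Pi.single j 1) m = tailSum p q m + if m ≤ j.val then 1 else 0 := by
  simp only [tailSum, Pi.add_apply, add_sub_right_comm, sum_add_distrib, Pi.single_apply,
    sum_ite_eq', mem_filter, mem_univ, true_and]

lemma exists_mem_digSegD_add_single (hd : 0 < d) (hpq : p ≤ q) :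
    ∃ j, q ∈ digSegD prec p (q + Pi.single j 1) := by
  set A := ∑ i, p i
  set B := ∑ i, q i
  have hAB : A ≤ B := sum_le_sum fun i _ => hpq i
  have hB : B ∈ Ico A (B + 1) := mem_Ico.mpr ⟨hAB, lt_add_one B⟩
  obtain ⟨j, hj₁, hj₂⟩ := exists_tailSum_lt_le_add_one hd hpq (rankFromTop_pos (prec := prec) hB)
    (by rw [tailSum_zero]; linarith [rankFromTop_le (prec := prec) hB])
  refine ⟨j, ?_⟩
  set q' := q + Pi.single j 1
  have hsum : ∑ i, q' i = B + 1 := sum_add_single j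
  have hpq' : p ≤ q' := hpq.trans (le_add_single j)
  have hdir : dirAt prec p q' B j := by
    rw [dirAt_iff, hsum, tailSum_add_single, tailSum_add_single]
    simp only [le_refl, if_true, Nat.not_succ_le_self, if_false, add_zero]
    exact ⟨hj₁, hj₂⟩
  have hlast : segPoint prec p q' B = q := by
    ext l
    have h := segPoint_add_one (prec := prec) (q := q') hAB l
    rw [← hsum, segPoint_sum_right hpq'] at h
    rcases eq_or_ne l j with rfl | hl
    · rw [if_pos hdir] at h
      have : q' l = q l + 1 := by simp [q']
      omega
    · rw [if_neg fun h' => hl (dirAt_unique hpq' h' hdir)] at h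
      have : q' l = q l := by simp [q', hl]
      omega
  rw [← hlast]
  exact segPoint_mem_digSegD hpq' hAB (by omega)

theorem exists_notMem_digSegD_subset (hd : 0 < d) (hpq : p ≤ q) :
    ∃ r, q ≤ r ∧ r ∉ digSegD prec p q ∧ digSegD prec p q ⊆ digSegD prec p r := by
  obtain ⟨j, hq⟩ := exists_mem_digSegD_add_single (prec := prec) hd hpq
  refine ⟨q + Pi.single j 1, le_add_single j, fun h => ?_,
    digSegD_subset_of_mem (hpq.trans (le_add_single j)) hq⟩
  have := h.2.1
  rw [sum_add_single] at this
  omega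

end Prolongation

theorem digSegD_axioms (d : ℕ) (hd : 2 ≤ d) (prec : ℤ → ℤ → Prop)
    [IsStrictTotalOrder ℤ prec] (p q : Fin d → ℤ) (hpq : ∀ i, p i ≤ q i) :
    IsGridPathD p q (digSegD prec p q) ∧
    (∀ r ∈ digSegD prec p q, digSegD prec p r ⊆ digSegD prec p q) ∧
    (∃ r : Fin d → ℤ, (∀ i, q i ≤ r i) ∧ r ∉ digSegD prec p q ∧
      digSegD prec p q ⊆ digSegD prec p r) ∧
    (∀ i : Fin d, p i = q i → ∀ r ∈ digSegD prec p q, r i = p i) :=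
  ⟨isGridPathD_digSegD hpq, fun _ hr => digSegD_subset_of_mem hpq hr,
    exists_notMem_digSegD_subset (by omega) hpq, fun _ hi _ hr => digSegD_apply_of_eq hi hr⟩
end
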